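/- arXiv:1201.6036 — 6 statements merged into one kernel-verified Lean document; each statement's English description precedes it below -/
import Mathlib

section
/- Let (X_n)_{n≥1} be a sequence of real-valued random variables such that φ(u_k) and φ(v_k) are integrable for every k ≥ 0. Let φ : ℝ → ℝ be a nonnegative nondecreasing convex function with φ(0) = 0 for which there exists a real constant K > 0 such that φ(x + y) ≤ K(φ(x) + φ(y)) for all real x, y. Let χ be a positive nondecreasing function on (0,∞), and let 0 = b_0 < b_1 ≤ b_2 ≤ … ≤ b_n be real numbers. Then P( φ(S_k) ≤ χ(b_k) for all 1 ≤ k ≤ n ) ≥ 1 − 2K · Σ_{k=1}^n ( E[φ(u_k)] + E[φ(v_k)] − E[φ(u_{k−1})] − E[φ(v_{k−1})] ) / χ(b_k). -/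
/-!
On the event that `φ (S k) > χ (b k)` for some `k ≤ n`, the nondecreasing process
`T k = φ (u k) + φ (v k)`, which starts at `0` and dominates `φ (S k)` because `S k ≤ u k`,
satisfies `T k / χ (b k) > 1`. Writing `T k` as the sum of its increments and using that
`χ (b ·)` is nondecreasing, `T k / χ (b k)` is at most `Z = ∑ (T k - T (k - 1)) / χ (b k)`,
so Markov's inequality bounds the probability of that event by `E Z`.
Finally `1 ≤ K` unless `φ = 0`.
-/

open MeasureTheory Finset

lemma sum_Icc_one_sub_pred {M : Type*} [AddCommGroup M] (T : ℕ → M) (j : ℕ) :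
    ∑ k ∈ Icc 1 j, (T k - T (k - 1)) = T j - T 0 := by
  induction j with
  | zero => simp
  | succ j ih => rw [sum_Icc_succ_top (by omega), ih]; simp

lemma monotone_sum_Icc_of_nonneg {M : Type*} [AddCommMonoid M] [PartialOrder M]
    [IsOrderedAddMonoid M] {f : ℕ → M} (hf : ∀ i, 0 ≤ f i) (a : ℕ) :
    Monotone fun k ↦ ∑ i ∈ Icc a k, f i := fun _ _ hjk ↦
  sum_le_sum_of_subset_of_nonneg (Icc_subset_Icc_right hjk) fun i _ _ ↦ hf i

lemma monotoneOn_Icc_of_le_add_one {α : Type*} [Preorder α] {b : ℕ → α} {m n : ℕ}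
    (h : ∀ k, m ≤ k → k < n → b k ≤ b (k + 1)) : MonotoneOn b (Set.Icc m n) :=
  monotoneOn_of_le_add_one Set.ordConnected_Icc fun k _ hk hk' ↦ h k hk.1 hk'.2

section WeightedIncrements

variable {T c : ℕ → ℝ} {n : ℕ}

lemma sub_pred_div_nonneg (hT : Monotone T) (hc : ∀ k ∈ Icc 1 n, 0 < c k) {k : ℕ}
    (hk : k ∈ Icc 1 n) : 0 ≤ (T k - T (k - 1)) / c k :=
  div_nonneg (sub_nonneg.2 (hT (Nat.sub_le k 1))) (hc k hk).le

lemma sum_Icc_one_sub_pred_div_nonneg (hT : Monotone T) (hc : ∀ k ∈ Icc 1 n, 0 < c k) :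
    0 ≤ ∑ k ∈ Icc 1 n, (T k - T (k - 1)) / c k :=
  sum_nonneg fun _ hk ↦ sub_pred_div_nonneg hT hc hk

lemma div_le_sum_Icc_one_sub_pred_div (hT : Monotone T) (hT0 : T 0 = 0)
    (hc_pos : ∀ k ∈ Icc 1 n, 0 < c k) (hc_mono : MonotoneOn c (Set.Icc 1 n)) {j : ℕ}
    (hj : j ∈ Icc 1 n) : T j / c j ≤ ∑ k ∈ Icc 1 n, (T k - T (k - 1)) / c k := by
  have hjn : Icc 1 j ⊆ Icc 1 n := Icc_subset_Icc_right (mem_Icc.1 hj).2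
  calc T j / c j = ∑ k ∈ Icc 1 j, (T k - T (k - 1)) / c j := by
        rw [← sum_div, sum_Icc_one_sub_pred, hT0, sub_zero]
    _ ≤ ∑ k ∈ Icc 1 j, (T k - T (k - 1)) / c k := by
        refine sum_le_sum fun k hk ↦ div_le_div_of_nonneg_left
          (sub_nonneg.2 (hT (Nat.sub_le k 1))) (hc_pos k (hjn hk)) ?_
        exact hc_mono (by simpa using hjn hk) (by simpa using hj) (mem_Icc.1 hk).2
    _ ≤ ∑ k ∈ Icc 1 n, (T k - T (k - 1)) / c k :=
        sum_le_sum_of_subset_of_nonneg hjn fun _ hk _ ↦ sub_pred_div_nonneg hT hc_pos hk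

end WeightedIncrements

lemma measureReal_exists_lt_le_sum_integral_sub_div {Ω : Type*} [MeasurableSpace Ω]
    {μ : Measure Ω} [IsFiniteMeasure μ] {T : ℕ → Ω → ℝ} {c : ℕ → ℝ} {n : ℕ}
    (hT_int : ∀ k, Integrable (T k) μ) (hT_mono : ∀ ω, Monotone (T · ω)) (hT0 : ∀ ω, T 0 ω = 0)
    (hc_pos : ∀ k ∈ Icc 1 n, 0 < c k) (hc_mono : MonotoneOn c (Set.Icc 1 n)) :
    μ.real {ω | ∃ k ∈ Icc 1 n, c k < T k ω} ≤
      ∑ k ∈ Icc 1 n, ((∫ ω, T k ω ∂μ) - ∫ ω, T (k - 1) ω ∂μ) / c k := by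
  set Z : Ω → ℝ := fun ω ↦ ∑ k ∈ Icc 1 n, (T k ω - T (k - 1) ω) / c k with hZ
  have hΔ_int (k : ℕ) : Integrable (fun ω ↦ (T k ω - T (k - 1) ω) / c k) μ :=
    ((hT_int k).sub (hT_int (k - 1))).div_const _
  have hsub : {ω | ∃ k ∈ Icc 1 n, c k < T k ω} ⊆ {ω | 1 ≤ Z ω} := by
    rintro ω ⟨k, hk, hck⟩
    exact ((one_lt_div (hc_pos k hk)).2 hck).le.trans
      (div_le_sum_Icc_one_sub_pred_div (hT_mono ω) (hT0 ω) hc_pos hc_mono hk)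
  calc μ.real {ω | ∃ k ∈ Icc 1 n, c k < T k ω} ≤ 1 * μ.real {ω | 1 ≤ Z ω} := by
        rw [one_mul]; exact measureReal_mono hsub
    _ ≤ ∫ ω, Z ω ∂μ := mul_meas_ge_le_integral_of_nonneg
        (ae_of_all _ fun ω ↦ sum_Icc_one_sub_pred_div_nonneg (hT_mono ω) hc_pos)
        (integrable_finsetSum _ fun k _ ↦ hΔ_int k) 1
    _ = _ := by
        rw [hZ, integral_finsetSum _ fun k _ ↦ hΔ_int k]
        simp_rw [integral_div, integral_sub (hT_int _) (hT_int _)]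

section PositiveNegativeParts

variable {φ : ℝ → ℝ} (hφ_mono : Monotone φ) (x : ℕ → ℝ)
include hφ_mono

lemma monotone_map_sum_max_add_map_sum_max :
    Monotone fun k ↦ φ (∑ i ∈ Icc 1 k, max (x i) 0) + φ (∑ i ∈ Icc 1 k, max (-x i) 0) :=
  fun _ _ h ↦ add_le_add
    (hφ_mono (monotone_sum_Icc_of_nonneg (fun i ↦ le_max_right (x i) 0) 1 h))
    (hφ_mono (monotone_sum_Icc_of_nonneg (fun i ↦ le_max_right (-x i) 0) 1 h))

lemma map_sum_le_map_sum_max_add_map_sum_max (hφ_nonneg : ∀ y, 0 ≤ φ y) (s : Finset ℕ) :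
    φ (∑ i ∈ s, x i) ≤ φ (∑ i ∈ s, max (x i) 0) + φ (∑ i ∈ s, max (-x i) 0) :=
  (hφ_mono (sum_le_sum fun i _ ↦ le_max_left (x i) 0)).trans
    (le_add_of_nonneg_right (hφ_nonneg _))

end PositiveNegativeParts

lemma measureReal_exists_lt_map_sum_le {Ω : Type*} [MeasurableSpace Ω] {μ : Measure Ω}
    [IsFiniteMeasure μ] {X u v : ℕ → Ω → ℝ} {φ : ℝ → ℝ} {c : ℕ → ℝ} {n : ℕ}
    (hu : ∀ k ω, u k ω = ∑ i ∈ Icc 1 k, max (X i ω) 0)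
    (hv : ∀ k ω, v k ω = ∑ i ∈ Icc 1 k, max (-X i ω) 0)
    (hφ_nonneg : ∀ x, 0 ≤ φ x) (hφ_mono : Monotone φ) (hφ_zero : φ 0 = 0)
    (hu_int : ∀ k, Integrable (fun ω ↦ φ (u k ω)) μ)
    (hv_int : ∀ k, Integrable (fun ω ↦ φ (v k ω)) μ)
    (hc_pos : ∀ k ∈ Icc 1 n, 0 < c k) (hc_mono : MonotoneOn c (Set.Icc 1 n)) :
    μ.real {ω | ∃ k ∈ Icc 1 n, c k < φ (∑ i ∈ Icc 1 k, X i ω)} ≤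
      ∑ k ∈ Icc 1 n, ((∫ ω, φ (u k ω) ∂μ) + (∫ ω, φ (v k ω) ∂μ)
        - (∫ ω, φ (u (k - 1) ω) ∂μ) - (∫ ω, φ (v (k - 1) ω) ∂μ)) / c k := by
  set T : ℕ → Ω → ℝ := fun k ω ↦ φ (u k ω) + φ (v k ω)
  have hT_mono (ω : Ω) : Monotone (T · ω) := by
    simpa only [T, hu, hv] using monotone_map_sum_max_add_map_sum_max hφ_mono (X · ω)
  have hT0 (ω : Ω) : T 0 ω = 0 := by simp [T, hu, hv, hφ_zero]
  have hT_int (k : ℕ) : Integrable (T k) μ := (hu_int k).add (hv_int k)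
  have hdom (k : ℕ) (ω : Ω) : φ (∑ i ∈ Icc 1 k, X i ω) ≤ T k ω := by
    simpa only [T, hu, hv] using
      map_sum_le_map_sum_max_add_map_sum_max hφ_mono (X · ω) hφ_nonneg (Icc 1 k)
  have hsub : {ω | ∃ k ∈ Icc 1 n, c k < φ (∑ i ∈ Icc 1 k, X i ω)} ⊆
      {ω | ∃ k ∈ Icc 1 n, c k < T k ω} := fun ω ⟨k, hk, hlt⟩ ↦ ⟨k, hk, hlt.trans_le (hdom k ω)⟩
  refine (measureReal_mono hsub).trans <|
    (measureReal_exists_lt_le_sum_integral_sub_div hT_int hT_mono hT0 hc_pos hc_mono).trans_eq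
      (sum_congr rfl fun k _ ↦ ?_)
  rw [integral_add (hu_int k) (hv_int k), integral_add (hu_int (k - 1)) (hv_int (k - 1))]
  ring

lemma one_le_measureReal_add_of_compl_subset {Ω : Type*} [MeasurableSpace Ω] {μ : Measure Ω}
    [IsProbabilityMeasure μ] {s t : Set Ω} (h : sᶜ ⊆ t) : 1 ≤ μ.real s + μ.real t := by
  rw [← probReal_univ (μ := μ), ← Set.compl_subset_iff_union.1 h]
  exact measureReal_union_le s t

lemma one_le_of_map_add_le_mul {α : Type*} [AddZeroClass α] {φ : α → ℝ} {K : ℝ}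
    (hφ_zero : φ 0 = 0) (hφ_add : ∀ x y, φ (x + y) ≤ K * (φ x + φ y)) {x : α} (hx : 0 < φ x) :
    1 ≤ K := by
  have := hφ_add x 0
  rw [add_zero, hφ_zero, add_zero] at this
  exact (one_le_div hx).2 this |>.trans_eq (mul_div_cancel_right₀ K hx.ne')

theorem hajek_renyi_type_inequality_arbitrary_general
    {Ω : Type*} [MeasurableSpace Ω] (μ : Measure Ω) [IsProbabilityMeasure μ]
    (X S u v : ℕ → Ω → ℝ)
    (hS : ∀ k ω, S k ω = ∑ i ∈ Finset.Icc 1 k, X i ω)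
    (hu : ∀ k ω, u k ω = ∑ i ∈ Finset.Icc 1 k, max (X i ω) 0)
    (hv : ∀ k ω, v k ω = ∑ i ∈ Finset.Icc 1 k, max (-(X i ω)) 0)
    (φ : ℝ → ℝ)
    (hφ_nonneg : ∀ x, 0 ≤ φ x)
    (hφ_mono : Monotone φ)
    (hφ_zero : φ 0 = 0)
    (K : ℝ)
    (hφ_subadd : ∀ x y : ℝ, φ (x + y) ≤ K * (φ x + φ y))
    (hu_int : ∀ k, Integrable (fun ω => φ (u k ω)) μ)
    (hv_int : ∀ k, Integrable (fun ω => φ (v k ω)) μ)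
    (χ : ℝ → ℝ)
    (hχ_pos : ∀ b : ℝ, 0 < b → 0 < χ b)
    (hχ_mono : ∀ a b : ℝ, 0 < a → a ≤ b → χ a ≤ χ b)
    (n : ℕ) (b : ℕ → ℝ)
    (hb1 : 0 < b 1)
    (hb_mono : ∀ k, 1 ≤ k → k < n → b k ≤ b (k + 1)) :
    1 - 2 * K * ∑ k ∈ Finset.Icc 1 n,
        ((∫ ω, φ (u k ω) ∂μ) + (∫ ω, φ (v k ω) ∂μ)
          - (∫ ω, φ (u (k - 1) ω) ∂μ) - (∫ ω, φ (v (k - 1) ω) ∂μ)) / χ (b k)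
      ≤ (μ {ω | ∀ k, 1 ≤ k → k ≤ n → φ (S k ω) ≤ χ (b k)}).toReal := by
  set D := ∑ k ∈ Finset.Icc 1 n, ((∫ ω, φ (u k ω) ∂μ) + (∫ ω, φ (v k ω) ∂μ)
    - (∫ ω, φ (u (k - 1) ω) ∂μ) - (∫ ω, φ (v (k - 1) ω) ∂μ)) / χ (b k)
  have hb := monotoneOn_Icc_of_le_add_one hb_mono
  have hb_pos (k : ℕ) (hk : k ∈ Set.Icc 1 n) : 0 < b k :=
    hb1.trans_le (hb ⟨le_rfl, hk.1.trans hk.2⟩ hk hk.1)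
  have hc_pos (k : ℕ) (hk : k ∈ Icc 1 n) : 0 < χ (b k) := hχ_pos _ (hb_pos k (by simpa using hk))
  have hc_mono : MonotoneOn (fun k ↦ χ (b k)) (Set.Icc 1 n) := fun j hj k hk hjk ↦
    hχ_mono _ _ (hb_pos j hj) (hb hj hk hjk)
  have hexceed : μ.real {ω | ∃ k ∈ Icc 1 n, χ (b k) < φ (S k ω)} ≤ D := by
    simpa only [hS] using measureReal_exists_lt_map_sum_le hu hv hφ_nonneg hφ_mono hφ_zero
      hu_int hv_int hc_pos hc_mono
  have hcover : 1 ≤ μ.real {ω | ∀ k, 1 ≤ k → k ≤ n → φ (S k ω) ≤ χ (b k)} +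
      μ.real {ω | ∃ k ∈ Icc 1 n, χ (b k) < φ (S k ω)} :=
    one_le_measureReal_add_of_compl_subset fun ω hω ↦ by simpa [and_assoc] using hω
  have hKD : D = 0 ∨ 1 ≤ K := by
    rcases eq_or_ne φ 0 with hφ | hφ
    · left; simp [D, hφ]
    · obtain ⟨x, hx⟩ := Function.ne_iff.1 hφ
      exact .inr (one_le_of_map_add_le_mul hφ_zero hφ_subadd ((hφ_nonneg x).lt_of_ne' hx))
  change 1 - 2 * K * D ≤ μ.real _
  rcases hKD with hD0 | hK
  · rw [hD0] at hexceed ⊢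
    linarith
  · nlinarith [hexceed.trans' measureReal_nonneg]

/-- **Hájek–Rényi type inequality for arbitrary random variables**
(Theorem 3.1 of Ndiaye–Lo). Here `S n = Σ_{i=1}^n X_i`, `u n = Σ_{i=1}^n X_i⁺`,
`v n = Σ_{i=1}^n X_i⁻`. -/
theorem hajek_renyi_type_inequality_arbitrary
    {Ω : Type*} [MeasurableSpace Ω] (μ : Measure Ω) [IsProbabilityMeasure μ]
    (X S u v : ℕ → Ω → ℝ)
    (hXmeas : ∀ i, 1 ≤ i → Measurable (X i))
    (hS : ∀ k ω, S k ω = ∑ i ∈ Finset.Icc 1 k, X i ω)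
    (hu : ∀ k ω, u k ω = ∑ i ∈ Finset.Icc 1 k, max (X i ω) 0)
    (hv : ∀ k ω, v k ω = ∑ i ∈ Finset.Icc 1 k, max (-(X i ω)) 0)
    (φ : ℝ → ℝ)
    (hφ_nonneg : ∀ x, 0 ≤ φ x)
    (hφ_mono : Monotone φ)
    (hφ_convex : ConvexOn ℝ Set.univ φ)
    (hφ_zero : φ 0 = 0)
    (K : ℝ) (hK : 0 < K)
    (hφ_subadd : ∀ x y : ℝ, φ (x + y) ≤ K * (φ x + φ y))
    (hu_int : ∀ k, Integrable (fun ω => φ (u k ω)) μ)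
    (hv_int : ∀ k, Integrable (fun ω => φ (v k ω)) μ)
    (χ : ℝ → ℝ)
    (hχ_pos : ∀ b : ℝ, 0 < b → 0 < χ b)
    (hχ_mono : ∀ a b : ℝ, 0 < a → a ≤ b → χ a ≤ χ b)
    (n : ℕ) (b : ℕ → ℝ)
    (hb0 : b 0 = 0) (hb1 : 0 < b 1)
    (hb_mono : ∀ k, 1 ≤ k → k < n → b k ≤ b (k + 1)) :
    1 - 2 * K * ∑ k ∈ Finset.Icc 1 n,
        ((∫ ω, φ (u k ω) ∂μ) + (∫ ω, φ (v k ω) ∂μ)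
          - (∫ ω, φ (u (k - 1) ω) ∂μ) - (∫ ω, φ (v (k - 1) ω) ∂μ)) / χ (b k)
      ≤ (μ {ω | ∀ k, 1 ≤ k → k ≤ n → φ (S k ω) ≤ χ (b k)}).toReal :=
  hajek_renyi_type_inequality_arbitrary_general μ X S u v hS hu hv φ hφ_nonneg hφ_mono hφ_zero K
    hφ_subadd hu_int hv_int χ hχ_pos hχ_mono n b hb1 hb_mono
end

section
/- If (T_n)_{n≥1} is a demimartingale, then the sequence (T_n^+)_{n≥1} of positive parts is a demisubmartingale and the sequence (T_n^−)_{n≥1} of negative parts is a demisubmartingale, where x^+ = max(x,0) and x^- = max(−x,0). -/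
open MeasureTheory Filter

/-- A sequence `(T_n)_{n≥1}` of integrable real random variables is a *demimartingale*
if for every `j ≥ 1` and every componentwise nondecreasing `g : ℝ^j → ℝ` (i.e. monotone
for the product order) such that `(T_{j+1} - T_j) · g(T_1, …, T_j)` is integrable, we have
`E[(T_{j+1} - T_j) g(T_1, …, T_j)] ≥ 0`. -/
def IsDemimartingale {Ω : Type*} [MeasurableSpace Ω] (μ : Measure Ω)
    (T : ℕ → Ω → ℝ) : Prop :=
  (∀ j, 1 ≤ j → Integrable (T j) μ) ∧
  ∀ j, 1 ≤ j → ∀ g : (Fin j → ℝ) → ℝ, Monotone g →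
    Integrable (fun ω => (T (j + 1) ω - T j ω) * g (fun i => T (i.val + 1) ω)) μ →
    0 ≤ ∫ ω, (T (j + 1) ω - T j ω) * g (fun i => T (i.val + 1) ω) ∂μ

/-- A sequence `(T_n)_{n≥1}` of integrable real random variables is a *demisubmartingale*
if the above holds for every such `g` that is in addition nonnegative. -/
def IsDemisubmartingale {Ω : Type*} [MeasurableSpace Ω] (μ : Measure Ω)
    (T : ℕ → Ω → ℝ) : Prop :=
  (∀ j, 1 ≤ j → Integrable (T j) μ) ∧
  ∀ j, 1 ≤ j → ∀ g : (Fin j → ℝ) → ℝ, Monotone g → (∀ x, 0 ≤ g x) →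
    Integrable (fun ω => (T (j + 1) ω - T j ω) * g (fun i => T (i.val + 1) ω)) μ →
    0 ≤ ∫ ω, (T (j + 1) ω - T j ω) * g (fun i => T (i.val + 1) ω) ∂μ

lemma neg_demi {Ω : Type*} [MeasurableSpace Ω] {μ : Measure Ω} {T : ℕ → Ω → ℝ}
    (hT : IsDemimartingale μ T) : IsDemimartingale μ (fun n ω => -(T n ω)) := by
  refine ⟨fun n hn => (hT.1 n hn).neg, fun j hj g hg hint => ?_⟩
  have hg' : Monotone (fun x : Fin j → ℝ => -g (fun i => -(x i))) := by
    intro x y hxy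
    simp only [neg_le_neg_iff]
    exact hg (fun i => neg_le_neg (hxy i))
  have heq : (fun ω => (-(T (j+1) ω) - -(T j ω)) *
      g (fun i : Fin j => -(T (i.val+1) ω))) =
      (fun ω => (T (j+1) ω - T j ω) * (fun x : Fin j → ℝ => -g (fun i => -(x i)))
        (fun i : Fin j => T (i.val+1) ω)) := by
    funext ω; simp only; ring
  have hint' := hint
  simp only at hint' ⊢
  rw [heq] at hint'
  have h0 := hT.2 j hj (fun x : Fin j → ℝ => -g (fun i => -(x i))) hg' hint'
  rw [heq]
  exact h0

lemma pos_demi {Ω : Type*} [MeasurableSpace Ω] {μ : Measure Ω} {T : ℕ → Ω → ℝ}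
    (hT : IsDemimartingale μ T) : IsDemisubmartingale μ (fun n ω => max (T n ω) 0) := by
  refine ⟨fun n hn => (hT.1 n hn).pos_part, fun j hj g hg hg0 hInt => ?_⟩
  have hTj : Integrable (T j) μ := hT.1 j hj
  have hTj1 : Integrable (T (j+1)) μ := hT.1 (j+1) (by omega)
  let X : Ω → ℝ := fun ω => max (T (j+1) ω) 0 - max (T j ω) 0
  let G : Ω → ℝ := fun ω => g (fun i : Fin j => max (T (i.val+1) ω) 0)
  have hG0 : ∀ ω, 0 ≤ G ω := fun ω => hg0 _
  have hFint : Integrable (fun ω => X ω * G ω) μ := hInt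
  have hXint : Integrable X μ := hTj1.pos_part.sub hTj.pos_part
  obtain ⟨X', hX'm, hX'e⟩ := hXint.1
  obtain ⟨F', hF'm, hF'e⟩ := hFint.1
  obtain ⟨A', hA'm, hA'e⟩ := hTj.1
  obtain ⟨B', hB'm, hB'e⟩ := hTj1.1
  have hjj : j - 1 + 1 = j := by omega
  -- key pointwise inequality
  have hkey : ∀ ω, (T (j+1) ω - T j ω) * (if 0 < T j ω then (1:ℝ) else 0) ≤ X ω := by
    intro ω
    by_cases h : 0 < T j ω
    · simp only [if_pos h, mul_one]
      show _ ≤ max (T (j+1) ω) 0 - max (T j ω) 0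
      rw [max_eq_left h.le]
      have := le_max_left (T (j+1) ω) 0
      linarith
    · simp only [if_neg h, mul_zero]
      show (0:ℝ) ≤ max (T (j+1) ω) 0 - max (T j ω) 0
      rw [max_eq_right (le_of_not_gt h), sub_zero]
      exact le_max_right _ _
  -- the truncated sequence is a.e. strongly measurable and dominated
  have hmeasN : ∀ N : ℕ, AEStronglyMeasurable (fun ω => X ω * min (G ω) N) μ := by
    intro N
    refine ⟨fun ω => if X' ω ≠ 0 then X' ω * min (F' ω / X' ω) N else 0, ?_, ?_⟩
    · refine Measurable.stronglyMeasurable ?_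
      refine Measurable.ite ?_ ?_ measurable_const
      · exact (hX'm.measurable (measurableSet_singleton (0:ℝ))).compl
      · exact hX'm.measurable.mul ((hF'm.measurable.div hX'm.measurable).min measurable_const)
    · filter_upwards [hX'e, hF'e] with ω e1 e2
      simp only [← e1, ← e2]
      by_cases hx : X ω = 0
      · simp [hx]
      · rw [if_pos hx, mul_div_cancel_left₀ _ hx]
  have hboundN : ∀ (N : ℕ) ω, ‖X ω * min (G ω) N‖ ≤ ‖X ω * G ω‖ := by
    intro N ω
    rw [Real.norm_eq_abs, Real.norm_eq_abs, abs_mul, abs_mul]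
    have h1 : 0 ≤ min (G ω) (N:ℝ) := le_min (hG0 ω) (Nat.cast_nonneg N)
    rw [abs_of_nonneg h1, abs_of_nonneg (hG0 ω)]
    exact mul_le_mul_of_nonneg_left (min_le_left _ _) (abs_nonneg _)
  have hfNint : ∀ N : ℕ, Integrable (fun ω => X ω * min (G ω) N) μ :=
    fun N => Integrable.mono' hFint.norm (hmeasN N) (Eventually.of_forall (hboundN N))
  -- the key nonnegativity for each truncation level
  have key : ∀ N : ℕ, 0 ≤ ∫ ω, X ω * min (G ω) N ∂μ := by
    intro N
    set h : (Fin j → ℝ) → ℝ :=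
      fun x => (if 0 < x ⟨j-1, by omega⟩ then (1:ℝ) else 0) * min (g (fun i => max (x i) 0)) N
      with hhdef
    have hmono : Monotone h := by
      intro x y hxy
      have h1 : (if 0 < x ⟨j-1, by omega⟩ then (1:ℝ) else 0) ≤
          (if 0 < y ⟨j-1, by omega⟩ then (1:ℝ) else 0) := by
        by_cases hx : 0 < x ⟨j-1, by omega⟩
        · rw [if_pos hx, if_pos (lt_of_lt_of_le hx (hxy _))]
        · rw [if_neg hx]; split <;> norm_num
      have h2 : min (g (fun i => max (x i) 0)) (N:ℝ) ≤ min (g (fun i => max (y i) 0)) N :=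
        min_le_min (hg (fun i => max_le_max (hxy i) le_rfl)) le_rfl
      refine mul_le_mul h1 h2 (le_min (hg0 _) (Nat.cast_nonneg N)) ?_
      split <;> norm_num
    have hform : (fun ω => (T (j+1) ω - T j ω) * h (fun i : Fin j => T (i.val+1) ω)) =
        (fun ω => (T (j+1) ω - T j ω) *
          ((if 0 < T j ω then (1:ℝ) else 0) * min (G ω) N)) := by
      funext ω
      simp only [hhdef, G, hjj]
    have hψae : (fun ω => (T (j+1) ω - T j ω) *
        ((if 0 < T j ω then (1:ℝ) else 0) * min (G ω) N)) =ᵐ[μ]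
        (fun ω => if X' ω ≠ 0 then
          (B' ω - A' ω) * ((if 0 < A' ω then (1:ℝ) else 0) * min (F' ω / X' ω) N) else 0) := by
      filter_upwards [hX'e, hF'e, hA'e, hB'e] with ω e1 e2 e3 e4
      rw [← e1, ← e2, ← e3, ← e4]
      by_cases hx : X ω = 0
      · rw [if_neg (not_not_intro hx)]
        by_cases htj : 0 < T j ω
        · have h2 : max (T (j+1) ω) 0 = T j ω := by
            have hX0 : max (T (j+1) ω) 0 - max (T j ω) 0 = 0 := hx
            rw [max_eq_left htj.le] at hX0
            linarith
          have h3 : T (j+1) ω = T j ω := by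
            rcases le_or_gt (T (j+1) ω) 0 with hle | hlt
            · rw [max_eq_right hle] at h2; linarith
            · rw [max_eq_left hlt.le] at h2; exact h2
          rw [h3]; ring
        · rw [if_neg htj]; ring
      · rw [if_pos hx, mul_div_cancel_left₀ _ hx]
    have hint2 : Integrable (fun ω => (T (j+1) ω - T j ω) *
        ((if 0 < T j ω then (1:ℝ) else 0) * min (G ω) N)) μ := by
      refine Integrable.mono' (((hTj1.sub hTj).abs).const_mul N)
        ⟨_, ?_, hψae⟩ (Eventually.of_forall ?_)
      · refine Measurable.stronglyMeasurable ?_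
        refine Measurable.ite ?_ ?_ measurable_const
        · exact (hX'm.measurable (measurableSet_singleton (0:ℝ))).compl
        · refine (hB'm.measurable.sub hA'm.measurable).mul (Measurable.mul ?_ ?_)
          · exact Measurable.ite (measurableSet_lt measurable_const hA'm.measurable)
              measurable_const measurable_const
          · exact (hF'm.measurable.div hX'm.measurable).min measurable_const
      · intro ω
        rw [Real.norm_eq_abs, abs_mul]
        have h1 : 0 ≤ min (G ω) (N:ℝ) := le_min (hG0 ω) (Nat.cast_nonneg N)
        have h2 : (if 0 < T j ω then (1:ℝ) else 0) * min (G ω) N ≤ N := by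
          split
          · rw [one_mul]; exact min_le_right _ _
          · rw [zero_mul]; exact Nat.cast_nonneg N
        have h3 : 0 ≤ (if 0 < T j ω then (1:ℝ) else 0) * min (G ω) N :=
          mul_nonneg (by split <;> norm_num) h1
        rw [abs_of_nonneg h3]
        calc |T (j+1) ω - T j ω| * ((if 0 < T j ω then (1:ℝ) else 0) * min (G ω) N)
            ≤ |T (j+1) ω - T j ω| * N := mul_le_mul_of_nonneg_left h2 (abs_nonneg _)
          _ = (N:ℝ) * |T (j+1) ω - T j ω| := mul_comm _ _
    have h0 := hT.2 j hj h hmono (by rw [hform]; exact hint2)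
    rw [hform] at h0
    refine h0.trans (integral_mono hint2 (hfNint N) ?_)
    intro ω
    have hik := hkey ω
    have h1 : 0 ≤ min (G ω) (N:ℝ) := le_min (hG0 ω) (Nat.cast_nonneg N)
    calc (T (j+1) ω - T j ω) * ((if 0 < T j ω then (1:ℝ) else 0) * min (G ω) N)
        = ((T (j+1) ω - T j ω) * (if 0 < T j ω then (1:ℝ) else 0)) * min (G ω) N := by ring
      _ ≤ X ω * min (G ω) N := mul_le_mul_of_nonneg_right hik h1
  -- pass to the limit
  have htend : Tendsto (fun N : ℕ => ∫ ω, X ω * min (G ω) N ∂μ) atTop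
      (nhds (∫ ω, X ω * G ω ∂μ)) := by
    refine tendsto_integral_of_dominated_convergence (fun ω => ‖X ω * G ω‖)
      (fun N => hmeasN N) hFint.norm
      (fun N => Eventually.of_forall (hboundN N)) (Eventually.of_forall ?_)
    intro ω
    apply tendsto_nhds_of_eventually_eq
    filter_upwards [eventually_ge_atTop ⌈G ω⌉₊] with N hN
    have : G ω ≤ (N:ℝ) := le_trans (Nat.le_ceil _) (Nat.cast_le.2 hN)
    rw [min_eq_left this]
  exact ge_of_tendsto' htend key

/-- **Christofides, Corollary 2.1**: if `(T_n)` is a demimartingale, then the sequences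
of positive parts `(T_n⁺)` and of negative parts `(T_n⁻)` are demisubmartingales,
where `x⁺ = max(x,0)` and `x⁻ = max(-x,0)`. -/
theorem demimartingale_pos_part_neg_part
    {Ω : Type*} [MeasurableSpace Ω] (μ : Measure Ω) [IsProbabilityMeasure μ]
    (T : ℕ → Ω → ℝ)
    (hT : IsDemimartingale μ T) :
    IsDemisubmartingale μ (fun n ω => max (T n ω) 0) ∧
      IsDemisubmartingale μ (fun n ω => max (-(T n ω)) 0) := by
  exact ⟨pos_demi hT, pos_demi (neg_demi hT)⟩
end

section
/- Let (T_n)_{n≥1} be a demisubmartingale and let φ : ℝ → ℝ be a nonnegative nondecreasing convex function such that φ(T_k) is integrable for every k ≥ 1, with the convention E[φ(T_0)] = 0. Let χ be a positive nondecreasing function on (0,∞) and let 0 = b_0 < b_1 ≤ … ≤ b_n. Then P( φ(T_k) ≤ χ(b_k) for all 1 ≤ k ≤ n ) ≥ 1 − Σ_{k=1}^n ( E[φ(T_k)] − E[φ(T_{k−1})] ) / χ(b_k). -/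
open MeasureTheory Filter

noncomputable def lderiv (φ : ℝ → ℝ) (x : ℝ) : ℝ :=
  sSup ((fun δ => (φ x - φ (x - δ)) / δ) '' Set.Ioi (0:ℝ))

section lderiv
variable {φ : ℝ → ℝ} (hmono : Monotone φ) (hconv : ConvexOn ℝ Set.univ φ)

lemma lderiv_set_nonempty (x : ℝ) :
    ((fun δ => (φ x - φ (x - δ)) / δ) '' Set.Ioi (0:ℝ)).Nonempty :=
  ⟨_, ⟨1, by norm_num, rfl⟩⟩

include hconv in
lemma lderiv_bddAbove (x : ℝ) :
    BddAbove ((fun δ => (φ x - φ (x - δ)) / δ) '' Set.Ioi (0:ℝ)) := by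
  refine ⟨(φ (x + 1) - φ x) / 1, ?_⟩
  rintro _ ⟨δ, hδ, rfl⟩
  have := hconv.slope_mono_adjacent (Set.mem_univ (x - δ)) (Set.mem_univ (x + 1))
    (by linarith [Set.mem_Ioi.1 hδ]) (by linarith)
  simpa [sub_sub_cancel, add_sub_cancel_left] using this

include hconv in
lemma slope_le_lderiv {x y : ℝ} (h : y < x) : (φ x - φ y) / (x - y) ≤ lderiv φ x := by
  have : (φ x - φ y) / (x - y) ∈ (fun δ => (φ x - φ (x - δ)) / δ) '' Set.Ioi (0:ℝ) :=
    ⟨x - y, by simpa using sub_pos.2 h, by simp⟩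
  exact le_csSup (lderiv_bddAbove hconv x) this

include hconv in
lemma lderiv_le_slope {x y : ℝ} (h : x < y) : lderiv φ x ≤ (φ y - φ x) / (y - x) := by
  refine csSup_le (lderiv_set_nonempty x) ?_
  rintro _ ⟨δ, hδ, rfl⟩
  have := hconv.slope_mono_adjacent (Set.mem_univ (x - δ)) (Set.mem_univ y)
    (by linarith [Set.mem_Ioi.1 hδ]) h
  simpa [sub_sub_cancel] using this

include hconv in
lemma lderiv_key (x y : ℝ) : lderiv φ x * (y - x) ≤ φ y - φ x := by
  rcases lt_trichotomy y x with h | h | h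
  · have h1 := slope_le_lderiv hconv h
    have h2 : 0 < x - y := sub_pos.2 h
    rw [div_le_iff₀ h2] at h1
    nlinarith
  · simp [h]
  · have h1 := lderiv_le_slope hconv h
    have h2 : 0 < y - x := sub_pos.2 h
    rw [le_div_iff₀ h2] at h1
    linarith

include hmono hconv in
lemma lderiv_nonneg (x : ℝ) : 0 ≤ lderiv φ x := by
  have h1 := slope_le_lderiv hconv (show x - 1 < x by linarith)
  have h2 : 0 ≤ φ x - φ (x - 1) := sub_nonneg.2 (hmono (by linarith))
  have : (0:ℝ) ≤ (φ x - φ (x - 1)) / (x - (x - 1)) := by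
    apply div_nonneg h2; linarith
  linarith

include hconv in
lemma lderiv_mono : Monotone (lderiv φ) := by
  intro x y hxy
  rcases eq_or_lt_of_le hxy with rfl | h
  · exact le_rfl
  · exact (lderiv_le_slope hconv h).trans (slope_le_lderiv hconv h)

end lderiv

noncomputable def phiTr (φ : ℝ → ℝ) (m : ℝ) (x : ℝ) : ℝ :=
  if x ≤ m then φ x else φ m + lderiv φ m * (x - m)

section phiTr
variable {φ : ℝ → ℝ} (hmono : Monotone φ) (hconv : ConvexOn ℝ Set.univ φ)
  (hpos : ∀ x, 0 ≤ φ x) (m : ℝ)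

lemma phiTr_eq {x : ℝ} (h : x ≤ m) : phiTr φ m x = φ x := if_pos h

include hconv in
lemma phiTr_le (x : ℝ) : phiTr φ m x ≤ φ x := by
  unfold phiTr
  split_ifs with h
  · exact le_rfl
  · have := lderiv_key hconv m x
    linarith

include hmono hconv hpos in
lemma phiTr_nonneg (x : ℝ) : 0 ≤ phiTr φ m x := by
  unfold phiTr
  split_ifs with h
  · exact hpos x
  · have h1 := lderiv_nonneg hmono hconv m
    have h2 := hpos m
    nlinarith [not_le.1 h]

include hconv in
lemma phiTr_key (x y : ℝ) :
    lderiv φ (min x m) * (y - x) ≤ phiTr φ m y - phiTr φ m x := by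
  unfold phiTr
  rcases le_or_gt x m with hx | hx
  · rw [min_eq_left hx]
    split_ifs with hy
    · exact lderiv_key hconv x y
    · push_neg at hy
      have h1 := lderiv_key hconv x m
      have h2 : lderiv φ x ≤ lderiv φ m := lderiv_mono hconv hx
      have h3 : lderiv φ x * (y - m) ≤ lderiv φ m * (y - m) := by nlinarith
      nlinarith
  · rw [min_eq_right hx.le, if_neg (not_le.2 hx)]
    split_ifs with hy
    · have := lderiv_key hconv m y
      nlinarith
    · nlinarith [le_refl (lderiv φ m)]

include hmono hconv in
lemma phiTr_mono : Monotone (phiTr φ m) := by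
  intro x y hxy
  have h1 := phiTr_key hconv m x y
  have h2 := lderiv_nonneg hmono hconv (min x m)
  nlinarith [sub_nonneg.2 hxy]

end phiTr

theorem rao_aux
    {Ω : Type*} [MeasurableSpace Ω] (μ : Measure Ω) [IsProbabilityMeasure μ]
    (T : ℕ → Ω → ℝ)
    (hT : IsDemisubmartingale μ T)
    (hTmeas : ∀ j, 1 ≤ j → Measurable (T j))
    (φ : ℝ → ℝ)
    (hφ_nonneg : ∀ x, 0 ≤ φ x)
    (hφ_mono : Monotone φ)
    (hφ_convex : ConvexOn ℝ Set.univ φ)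
    (hφ_int : ∀ k, 1 ≤ k → Integrable (fun ω => φ (T k ω)) μ)
    (hφT0 : ∫ ω, φ (T 0 ω) ∂μ = 0)
    (χ : ℝ → ℝ)
    (hχ_pos : ∀ b : ℝ, 0 < b → 0 < χ b)
    (hχ_mono : ∀ a b : ℝ, 0 < a → a ≤ b → χ a ≤ χ b)
    (n : ℕ) (b : ℕ → ℝ)
    (hb0 : b 0 = 0) (hb1 : 0 < b 1)
    (hb_mono : ∀ k, 1 ≤ k → k < n → b k ≤ b (k + 1)) :
    1 - ∑ k ∈ Finset.Icc 1 n,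
        ((∫ ω, φ (T k ω) ∂μ) - (∫ ω, φ (T (k - 1) ω) ∂μ)) / χ (b k)
      ≤ (μ {ω | ∀ k, 1 ≤ k → k ≤ n → φ (T k ω) ≤ χ (b k)}).toReal := by
  classical
  -- trivial case n = 0
  rcases Nat.eq_zero_or_pos n with rfl | hn
  · have hset : {ω : Ω | ∀ k, 1 ≤ k → k ≤ 0 → φ (T k ω) ≤ χ (b k)} = Set.univ := by
      ext ω
      simp only [Set.mem_setOf_eq, Set.mem_univ, iff_true]
      intro k h1 h0
      omega
    rw [hset]
    simp
  -- positivity of the b's and χ's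
  have hbge : ∀ k, 1 ≤ k → k ≤ n → b 1 ≤ b k := by
    intro k hk
    induction k, hk using Nat.le_induction with
    | base => intro _; exact le_rfl
    | succ m hm ih => intro h; exact (ih (by omega)).trans (hb_mono m hm (by omega))
  have hbpos : ∀ k, 1 ≤ k → k ≤ n → 0 < b k := fun k h1 h2 => lt_of_lt_of_le hb1 (hbge k h1 h2)
  have hcpos : ∀ k, 1 ≤ k → k ≤ n → 0 < χ (b k) := fun k h1 h2 => hχ_pos _ (hbpos k h1 h2)
  -- the events and their indicators
  set E : ℕ → Set Ω := fun k => {ω | ∀ j, 1 ≤ j → j ≤ k → φ (T j ω) ≤ χ (b j)} with hE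
  set e : ℕ → Ω → ℝ := fun k => (E k).indicator (fun _ => (1:ℝ)) with he
  have hφmeas : Measurable φ := hφ_mono.measurable
  have hEmeas : ∀ k, MeasurableSet (E k) := by
    intro k
    have : E k = ⋂ j ∈ Finset.Icc 1 k, (fun ω => φ (T j ω)) ⁻¹' Set.Iic (χ (b j)) := by
      ext ω
      simp only [hE, Set.mem_setOf_eq, Set.mem_iInter, Set.mem_preimage, Set.mem_Iic,
        Finset.mem_Icc]
      constructor
      · intro h j hj; exact h j hj.1 hj.2
      · intro h j h1 h2; exact h j ⟨h1, h2⟩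
    rw [this]
    exact MeasurableSet.biInter (Finset.Icc 1 k).countable_toSet fun j hj =>
      (hφmeas.comp (hTmeas j (Finset.mem_Icc.1 hj).1)) measurableSet_Iic
  have hemeas : ∀ k, Measurable (e k) := fun k => measurable_const.indicator (hEmeas k)
  have he_nonneg : ∀ k ω, 0 ≤ e k ω := by
    intro k ω
    simp only [he]
    by_cases h : ω ∈ E k
    · rw [Set.indicator_of_mem h]; norm_num
    · rw [Set.indicator_of_notMem h]
  have he_le : ∀ k ω, e k ω ≤ 1 := by
    intro k ω
    simp only [he]
    by_cases h : ω ∈ E k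
    · rw [Set.indicator_of_mem h]
    · rw [Set.indicator_of_notMem h]; norm_num
  have hE0 : E 0 = Set.univ := by
    ext ω
    simp only [hE, Set.mem_setOf_eq, Set.mem_univ, iff_true]
    intro j h1 h0; omega
  have hEsub : ∀ k, E (k + 1) ⊆ E k := by
    intro k ω hω j h1 h2
    exact hω j h1 (by omega)
  -- integrability of the truncated integrands
  have hint_e : ∀ k j, 1 ≤ k → Integrable (fun ω => φ (T k ω) * e j ω) μ := by
    intro k j hk
    refine (hφ_int k hk).mono'
      (((hφmeas.comp (hTmeas k hk)).mul (hemeas j)).aestronglyMeasurable)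
      (ae_of_all _ fun ω => ?_)
    rw [Real.norm_eq_abs, abs_mul, abs_of_nonneg (hφ_nonneg _), abs_of_nonneg (he_nonneg j ω)]
    calc φ (T k ω) * e j ω ≤ φ (T k ω) * 1 :=
          mul_le_mul_of_nonneg_left (he_le j ω) (hφ_nonneg _)
      _ = φ (T k ω) := mul_one _
  have hd_nonneg : ∀ k j, (0:ℝ) ≤ ∫ ω, φ (T k ω) * e j ω ∂μ := fun k j =>
    integral_nonneg fun ω => mul_nonneg (hφ_nonneg _) (he_nonneg j ω)
  -- the key demisubmartingale estimate
  have hkey : ∀ k, 1 ≤ k →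
      (∫ ω, φ (T (k+1) ω) * e k ω ∂μ) ≤
        (∫ ω, φ (T (k+1) ω) ∂μ) - (∫ ω, φ (T k ω) ∂μ) + ∫ ω, φ (T k ω) * e k ω ∂μ := by
    intro k hk
    have hk1 : 1 ≤ k + 1 := by omega
    have hLmono : Monotone (lderiv φ) := lderiv_mono hφ_convex
    have hLnonneg : ∀ x, 0 ≤ lderiv φ x := lderiv_nonneg hφ_mono hφ_convex
    have hLmeas : Measurable (lderiv φ) := hLmono.measurable
    set G : (Fin k → ℝ) → ℝ :=
      fun v => if ∀ i : Fin k, φ (v i) ≤ χ (b (i.val + 1)) then 0 else 1 with hG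
    have hG01 : ∀ v, 0 ≤ G v ∧ G v ≤ 1 := by
      intro v
      simp only [hG]
      split_ifs <;> norm_num
    have hGmono : Monotone G := by
      intro v w hvw
      simp only [hG]
      by_cases h2 : ∀ i : Fin k, φ (w i) ≤ χ (b (i.val + 1))
      · have h1 : ∀ i : Fin k, φ (v i) ≤ χ (b (i.val + 1)) :=
          fun i => (hφ_mono (hvw i)).trans (h2 i)
        rw [if_pos h1, if_pos h2]
      · rw [if_neg h2]
        split_ifs <;> norm_num
    have hGcomp : ∀ ω, G (fun i => T (i.val + 1) ω) = 1 - e k ω := by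
      intro ω
      have hiff : (∀ i : Fin k, φ (T (i.val + 1) ω) ≤ χ (b (i.val + 1))) ↔ ω ∈ E k := by
        constructor
        · intro h j hj1 hj2
          have := h ⟨j - 1, by omega⟩
          simpa [Nat.sub_add_cancel hj1] using this
        · intro h i
          exact h (i.val + 1) (by omega) (by omega)
      simp only [hG]
      by_cases h : ω ∈ E k
      · rw [if_pos (hiff.2 h)]
        simp only [he, Set.indicator_of_mem h]
        norm_num
      · rw [if_neg (fun hc => h (hiff.1 hc))]
        simp only [he, Set.indicator_of_notMem h]
        norm_num
    set i0 : Fin k := ⟨k - 1, by omega⟩ with hi0def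
    have hi0 : i0.val + 1 = k := by
      show k - 1 + 1 = k
      omega
    have hphimeas : ∀ M : ℕ, Measurable (fun ω =>
        (phiTr φ (M:ℝ) (T (k+1) ω) - phiTr φ (M:ℝ) (T k ω)) * (1 - e k ω)) := by
      intro M
      exact (((phiTr_mono hφ_mono hφ_convex (M:ℝ)).measurable.comp (hTmeas (k+1) hk1)).sub
        ((phiTr_mono hφ_mono hφ_convex (M:ℝ)).measurable.comp (hTmeas k hk))).mul
        (measurable_const.sub (hemeas k))
    have hphibd : ∀ (M : ℕ) ω,
        ‖(phiTr φ (M:ℝ) (T (k+1) ω) - phiTr φ (M:ℝ) (T k ω)) * (1 - e k ω)‖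
          ≤ φ (T (k+1) ω) + φ (T k ω) := by
      intro M ω
      rw [Real.norm_eq_abs, abs_mul]
      have h1 : |1 - e k ω| ≤ 1 := by
        rw [abs_of_nonneg (by linarith [he_le k ω])]
        linarith [he_nonneg k ω]
      have h2 : |phiTr φ (M:ℝ) (T (k+1) ω) - phiTr φ (M:ℝ) (T k ω)|
          ≤ φ (T (k+1) ω) + φ (T k ω) := by
        have ha := phiTr_nonneg hφ_mono hφ_convex hφ_nonneg (M:ℝ) (T (k+1) ω)
        have hb := phiTr_nonneg hφ_mono hφ_convex hφ_nonneg (M:ℝ) (T k ω)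
        have hc := phiTr_le hφ_convex (M:ℝ) (T (k+1) ω)
        have hd := phiTr_le hφ_convex (M:ℝ) (T k ω)
        rw [abs_sub_le_iff]
        constructor <;> linarith
      calc |phiTr φ (M:ℝ) (T (k+1) ω) - phiTr φ (M:ℝ) (T k ω)| * |1 - e k ω|
          ≤ (φ (T (k+1) ω) + φ (T k ω)) * 1 :=
            mul_le_mul h2 h1 (abs_nonneg _)
              (by linarith [hφ_nonneg (T (k+1) ω), hφ_nonneg (T k ω)])
        _ = _ := mul_one _
    have hΦint : ∀ M : ℕ, Integrable (fun ω =>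
        (phiTr φ (M:ℝ) (T (k+1) ω) - phiTr φ (M:ℝ) (T k ω)) * (1 - e k ω)) μ := fun M =>
      ((hφ_int (k+1) hk1).add (hφ_int k hk)).mono' (hphimeas M).aestronglyMeasurable
        (ae_of_all _ (hphibd M))
    have hstep : ∀ M : ℕ,
        0 ≤ ∫ ω, (phiTr φ (M:ℝ) (T (k+1) ω) - phiTr φ (M:ℝ) (T k ω)) * (1 - e k ω) ∂μ := by
      intro M
      set g : (Fin k → ℝ) → ℝ := fun v => lderiv φ (min (v i0) (M:ℝ)) * G v with hg
      have hgmono : Monotone g := fun v w hvw =>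
        mul_le_mul (hLmono (min_le_min (hvw i0) le_rfl)) (hGmono hvw) (hG01 v).1 (hLnonneg _)
      have hgnonneg : ∀ v, 0 ≤ g v := fun v => mul_nonneg (hLnonneg _) (hG01 v).1
      have hcomp : ∀ ω, g (fun i => T (i.val + 1) ω)
          = lderiv φ (min (T k ω) (M:ℝ)) * (1 - e k ω) := by
        intro ω
        show lderiv φ (min (T (i0.val + 1) ω) (M:ℝ)) * G (fun i => T (i.val + 1) ω) = _
        rw [hi0, hGcomp ω]
      have hfacbd : ∀ ω, 0 ≤ lderiv φ (min (T k ω) (M:ℝ)) * (1 - e k ω) ∧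
          lderiv φ (min (T k ω) (M:ℝ)) * (1 - e k ω) ≤ lderiv φ (M:ℝ) := by
        intro ω
        have h1 : 0 ≤ 1 - e k ω := by linarith [he_le k ω]
        have h2 : 1 - e k ω ≤ 1 := by linarith [he_nonneg k ω]
        refine ⟨mul_nonneg (hLnonneg _) h1, ?_⟩
        calc lderiv φ (min (T k ω) (M:ℝ)) * (1 - e k ω)
            ≤ lderiv φ (M:ℝ) * 1 :=
              mul_le_mul (hLmono (min_le_right _ _)) h2 h1 (hLnonneg _)
          _ = _ := mul_one _
      have hFeq : (fun ω => (T (k+1) ω - T k ω) * g (fun i => T (i.val + 1) ω))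
          = fun ω => (T (k+1) ω - T k ω) * (lderiv φ (min (T k ω) (M:ℝ)) * (1 - e k ω)) :=
        funext fun ω => by rw [hcomp ω]
      have hFint : Integrable (fun ω => (T (k+1) ω - T k ω) * g (fun i => T (i.val + 1) ω)) μ := by
        rw [hFeq]
        refine Integrable.mono'
          ((((hT.1 (k+1) hk1).sub (hT.1 k hk)).abs).const_mul (lderiv φ (M:ℝ)))
          ((((hTmeas (k+1) hk1).sub (hTmeas k hk)).mul
            ((hLmeas.comp ((hTmeas k hk).min measurable_const)).mul
              (measurable_const.sub (hemeas k)))).aestronglyMeasurable)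
          (ae_of_all _ fun ω => ?_)
        rw [Real.norm_eq_abs, abs_mul]
        have hb := hfacbd ω
        rw [abs_of_nonneg hb.1]
        calc |T (k+1) ω - T k ω| * (lderiv φ (min (T k ω) (M:ℝ)) * (1 - e k ω))
            ≤ |T (k+1) ω - T k ω| * lderiv φ (M:ℝ) :=
              mul_le_mul_of_nonneg_left hb.2 (abs_nonneg _)
          _ = lderiv φ (M:ℝ) * |T (k+1) ω - T k ω| := mul_comm _ _
      have h0 := hT.2 k hk g hgmono hgnonneg hFint
      have hpt : ∀ ω, (T (k+1) ω - T k ω) * g (fun i => T (i.val + 1) ω)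
          ≤ (phiTr φ (M:ℝ) (T (k+1) ω) - phiTr φ (M:ℝ) (T k ω)) * (1 - e k ω) := by
        intro ω
        rw [hcomp ω]
        have h1 := phiTr_key hφ_convex (M:ℝ) (T k ω) (T (k+1) ω)
        have h2 : 0 ≤ 1 - e k ω := by linarith [he_le k ω]
        calc (T (k+1) ω - T k ω) * (lderiv φ (min (T k ω) (M:ℝ)) * (1 - e k ω))
            = (lderiv φ (min (T k ω) (M:ℝ)) * (T (k+1) ω - T k ω)) * (1 - e k ω) := by ring
          _ ≤ _ := mul_le_mul_of_nonneg_right h1 h2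
      calc (0:ℝ) ≤ _ := h0
        _ ≤ _ := integral_mono hFint (hΦint M) hpt
    have hlim : Tendsto (fun M : ℕ =>
        ∫ ω, (phiTr φ (M:ℝ) (T (k+1) ω) - phiTr φ (M:ℝ) (T k ω)) * (1 - e k ω) ∂μ) atTop
        (nhds (∫ ω, (φ (T (k+1) ω) - φ (T k ω)) * (1 - e k ω) ∂μ)) := by
      refine tendsto_integral_of_dominated_convergence
        (fun ω => φ (T (k+1) ω) + φ (T k ω))
        (fun M => (hphimeas M).aestronglyMeasurable)
        ((hφ_int (k+1) hk1).add (hφ_int k hk))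
        (fun M => ae_of_all _ (hphibd M))
        (ae_of_all _ fun ω => ?_)
      have hev : ∀ᶠ M : ℕ in atTop,
          (phiTr φ (M:ℝ) (T (k+1) ω) - phiTr φ (M:ℝ) (T k ω)) * (1 - e k ω)
            = (φ (T (k+1) ω) - φ (T k ω)) * (1 - e k ω) := by
        filter_upwards [eventually_ge_atTop (Nat.ceil (max (T k ω) (T (k+1) ω)))] with M hM
        have hMR : max (T k ω) (T (k+1) ω) ≤ (M:ℝ) :=
          (Nat.le_ceil _).trans (by exact_mod_cast hM)
        rw [phiTr_eq (M:ℝ) ((le_max_right _ _).trans hMR),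
          phiTr_eq (M:ℝ) ((le_max_left _ _).trans hMR)]
      exact Tendsto.congr' (EventuallyEq.symm hev) tendsto_const_nhds
    have hfinal : 0 ≤ ∫ ω, (φ (T (k+1) ω) - φ (T k ω)) * (1 - e k ω) ∂μ :=
      ge_of_tendsto' hlim hstep
    have hI1 : (∫ ω, (φ (T (k+1) ω) - φ (T k ω)) * (1 - e k ω) ∂μ)
        = ∫ ω, ((φ (T (k+1) ω) - φ (T (k+1) ω) * e k ω)
            - (φ (T k ω) - φ (T k ω) * e k ω)) ∂μ :=
      integral_congr_ae (ae_of_all _ fun ω => by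
        show (φ (T (k+1) ω) - φ (T k ω)) * (1 - e k ω)
            = (φ (T (k+1) ω) - φ (T (k+1) ω) * e k ω) - (φ (T k ω) - φ (T k ω) * e k ω)
        ring)
    have hI2 : (∫ ω, ((φ (T (k+1) ω) - φ (T (k+1) ω) * e k ω)
            - (φ (T k ω) - φ (T k ω) * e k ω)) ∂μ)
        = (∫ ω, (φ (T (k+1) ω) - φ (T (k+1) ω) * e k ω) ∂μ)
          - ∫ ω, (φ (T k ω) - φ (T k ω) * e k ω) ∂μ :=
      integral_sub ((hφ_int (k+1) hk1).sub (hint_e (k+1) k hk1))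
        ((hφ_int k hk).sub (hint_e k k hk))
    have hI3 : (∫ ω, (φ (T (k+1) ω) - φ (T (k+1) ω) * e k ω) ∂μ)
        = (∫ ω, φ (T (k+1) ω) ∂μ) - ∫ ω, φ (T (k+1) ω) * e k ω ∂μ :=
      integral_sub (hφ_int (k+1) hk1) (hint_e (k+1) k hk1)
    have hI4 : (∫ ω, (φ (T k ω) - φ (T k ω) * e k ω) ∂μ)
        = (∫ ω, φ (T k ω) ∂μ) - ∫ ω, φ (T k ω) * e k ω ∂μ :=
      integral_sub (hφ_int k hk) (hint_e k k hk)
    linarith [hfinal, hI1, hI2, hI3, hI4]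

  -- the Markov/Chebyshev estimate
  have hmark : ∀ k : ℕ, χ (b (k+1)) * (μ (E k \ E (k+1))).toReal ≤
      (∫ ω, φ (T (k+1) ω) * e k ω ∂μ) - ∫ ω, φ (T (k+1) ω) * e (k+1) ω ∂μ := by
    intro k
    have hdm : MeasurableSet (E k \ E (k+1)) := (hEmeas k).diff (hEmeas (k+1))
    have hgt : ∀ ω, ω ∈ E k \ E (k+1) → χ (b (k+1)) < φ (T (k+1) ω) := by
      intro ω hω
      obtain ⟨h0, h1⟩ := hω
      simp only [hE, Set.mem_setOf_eq] at h0 h1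
      by_contra hle
      push_neg at hle
      refine h1 fun j hj1 hj2 => ?_
      rcases Nat.lt_or_ge j (k+1) with h | h
      · exact h0 j hj1 (by omega)
      · have hj : j = k + 1 := by omega
        rw [hj]; exact hle
    have hpt : ∀ ω, χ (b (k+1)) * (E k \ E (k+1)).indicator (fun _ => (1:ℝ)) ω ≤
        φ (T (k+1) ω) * e k ω - φ (T (k+1) ω) * e (k+1) ω := by
      intro ω
      by_cases h1 : ω ∈ E (k+1)
      · have h0 : ω ∈ E k := hEsub k h1
        have hni : ω ∉ E k \ E (k+1) := fun hc => hc.2 h1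
        simp only [he, Set.indicator_of_notMem hni, Set.indicator_of_mem h0,
          Set.indicator_of_mem h1, mul_zero, mul_one]
        linarith
      · by_cases h0 : ω ∈ E k
        · have hmem : ω ∈ E k \ E (k+1) := ⟨h0, h1⟩
          have hgt' := hgt ω hmem
          simp only [he, Set.indicator_of_mem hmem, Set.indicator_of_mem h0,
            Set.indicator_of_notMem h1, mul_zero, mul_one]
          linarith
        · have hni : ω ∉ E k \ E (k+1) := fun hc => h0 hc.1
          simp only [he, Set.indicator_of_notMem hni, Set.indicator_of_notMem h0,
            Set.indicator_of_notMem h1, mul_zero, sub_zero]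
          linarith
    have hil : Integrable
        (fun ω => χ (b (k+1)) * (E k \ E (k+1)).indicator (fun _ => (1:ℝ)) ω) μ :=
      ((integrable_const (1:ℝ)).indicator hdm).const_mul _
    have hir : Integrable (fun ω => φ (T (k+1) ω) * e k ω - φ (T (k+1) ω) * e (k+1) ω) μ :=
      (hint_e (k+1) k (by omega)).sub (hint_e (k+1) (k+1) (by omega))
    have hI := integral_mono hil hir hpt
    rw [integral_const_mul,
      integral_sub (hint_e (k+1) k (by omega)) (hint_e (k+1) (k+1) (by omega)),
      integral_indicator_const (1:ℝ) hdm, smul_eq_mul, mul_one] at hI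
    exact hI
  -- measure splitting
  have hsplit : ∀ k, (μ (E k)).toReal = (μ (E (k+1))).toReal + (μ (E k \ E (k+1))).toReal := by
    intro k
    have h1 : E (k+1) ∪ (E k \ E (k+1)) = E k := Set.union_diff_cancel (hEsub k)
    have h2 : μ (E (k+1) ∪ (E k \ E (k+1))) = μ (E (k+1)) + μ (E k \ E (k+1)) :=
      measure_union disjoint_sdiff_self_right ((hEmeas k).diff (hEmeas (k+1)))
    rw [h1] at h2
    rw [h2, ENNReal.toReal_add (measure_ne_top μ _) (measure_ne_top μ _)]
  -- the main induction
  have hmain : ∀ m, 1 ≤ m → m ≤ n →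
      1 - (μ (E m)).toReal + (∫ ω, φ (T m ω) * e m ω ∂μ) / χ (b m)
        ≤ ∑ k ∈ Finset.Icc 1 m,
            ((∫ ω, φ (T k ω) ∂μ) - (∫ ω, φ (T (k - 1) ω) ∂μ)) / χ (b k) := by
    intro m hm
    induction m, hm using Nat.le_induction with
    | base =>
      intro h1n
      have hc1 : 0 < χ (b 1) := hcpos 1 le_rfl h1n
      have hM := hmark 0
      have he0 : ∀ ω, e 0 ω = 1 := by
        intro ω
        simp only [he]
        rw [Set.indicator_of_mem (by rw [hE0]; trivial)]
      have hfull : (∫ ω, φ (T 1 ω) * e 0 ω ∂μ) = ∫ ω, φ (T 1 ω) ∂μ :=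
        integral_congr_ae (ae_of_all _ fun ω => by show φ (T 1 ω) * e 0 ω = φ (T 1 ω); rw [he0 ω, mul_one])
      have hμ0 : (μ (E 0)).toReal = 1 := by rw [hE0]; simp
      have hd0 : (μ (E 0 \ E 1)).toReal = 1 - (μ (E 1)).toReal := by
        have := hsplit 0
        rw [hμ0] at this
        linarith
      rw [hfull, hd0] at hM
      rw [Finset.Icc_self, Finset.sum_singleton]
      simp only [Nat.sub_self, hφT0]
      have hdiv : 1 - (μ (E 1)).toReal
          ≤ ((∫ ω, φ (T 1 ω) ∂μ) - ∫ ω, φ (T 1 ω) * e 1 ω ∂μ) / χ (b 1) := by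
        rw [le_div_iff₀ hc1, mul_comm]
        exact hM
      have hsub : ((∫ ω, φ (T 1 ω) ∂μ) - ∫ ω, φ (T 1 ω) * e 1 ω ∂μ) / χ (b 1)
          = (∫ ω, φ (T 1 ω) ∂μ) / χ (b 1) - (∫ ω, φ (T 1 ω) * e 1 ω ∂μ) / χ (b 1) :=
        sub_div _ _ _
      rw [hsub] at hdiv
      have hz : ((∫ ω, φ (T 1 ω) ∂μ) - 0) / χ (b 1) = (∫ ω, φ (T 1 ω) ∂μ) / χ (b 1) := by
        rw [sub_zero]
      linarith
    | succ m hm ih =>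
      intro hmn
      have hmn' : m ≤ n := by omega
      have hIH := ih (by omega)
      have hc : 0 < χ (b m) := hcpos m hm hmn'
      have hc' : 0 < χ (b (m+1)) := hcpos (m+1) (by omega) hmn
      have hcc : χ (b m) ≤ χ (b (m+1)) :=
        hχ_mono _ _ (hbpos m hm hmn') (hb_mono m hm (by omega))
      have hM := hmark m
      have hK := hkey m hm
      have h1 : (μ (E m \ E (m+1))).toReal ≤
          ((∫ ω, φ (T (m+1) ω) * e m ω ∂μ) - ∫ ω, φ (T (m+1) ω) * e (m+1) ω ∂μ) / χ (b (m+1)) := by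
        rw [le_div_iff₀ hc', mul_comm]
        exact hM
      have h2 : (∫ ω, φ (T m ω) * e m ω ∂μ) / χ (b (m+1))
          ≤ (∫ ω, φ (T m ω) * e m ω ∂μ) / χ (b m) :=
        div_le_div_of_nonneg_left (hd_nonneg m m) hc hcc
      have h3 : (∫ ω, φ (T (m+1) ω) * e m ω ∂μ) / χ (b (m+1))
          ≤ ((∫ ω, φ (T (m+1) ω) ∂μ) - (∫ ω, φ (T m ω) ∂μ)
              + ∫ ω, φ (T m ω) * e m ω ∂μ) / χ (b (m+1)) := by
        gcongr
      have hadd : ((∫ ω, φ (T (m+1) ω) ∂μ) - (∫ ω, φ (T m ω) ∂μ)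
              + ∫ ω, φ (T m ω) * e m ω ∂μ) / χ (b (m+1))
          = ((∫ ω, φ (T (m+1) ω) ∂μ) - (∫ ω, φ (T m ω) ∂μ)) / χ (b (m+1))
            + (∫ ω, φ (T m ω) * e m ω ∂μ) / χ (b (m+1)) := add_div _ _ _
      have hsubdiv : ((∫ ω, φ (T (m+1) ω) * e m ω ∂μ)
              - ∫ ω, φ (T (m+1) ω) * e (m+1) ω ∂μ) / χ (b (m+1))
          = (∫ ω, φ (T (m+1) ω) * e m ω ∂μ) / χ (b (m+1))
            - (∫ ω, φ (T (m+1) ω) * e (m+1) ω ∂μ) / χ (b (m+1)) := sub_div _ _ _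
      have hs := hsplit m
      rw [← Finset.insert_Icc_right_eq_Icc_add_one (by omega : 1 ≤ m + 1),
        Finset.sum_insert (by simp)]
      simp only [Nat.add_sub_cancel]
      linarith
  -- conclusion
  have hfin := hmain n (by omega) le_rfl
  have hgoal : {ω : Ω | ∀ k, 1 ≤ k → k ≤ n → φ (T k ω) ≤ χ (b k)} = E n := by rw [hE]
  rw [hgoal]
  have hdn := hd_nonneg n n
  have hcn := hcpos n (by omega) le_rfl
  have hdd : 0 ≤ (∫ ω, φ (T n ω) * e n ω ∂μ) / χ (b n) := div_nonneg hdn hcn.le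
  linarith

/-- **Rao's inequality**: let `(T_n)_{n≥1}` be a demisubmartingale, `φ` a nonnegative
nondecreasing convex function with `φ(T_k)` integrable for `k ≥ 1` and the convention
`E[φ(T_0)] = 0`, `χ` a positive nondecreasing function on `(0,∞)`, and
`0 = b_0 < b_1 ≤ … ≤ b_n`. Then
`P(φ(T_k) ≤ χ(b_k), 1 ≤ k ≤ n) ≥ 1 - Σ_{k=1}^n (E[φ(T_k)] - E[φ(T_{k-1})]) / χ(b_k)`. -/
theorem rao_inequality_demisubmartingale
    {Ω : Type*} [MeasurableSpace Ω] (μ : Measure Ω) [IsProbabilityMeasure μ]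
    (T : ℕ → Ω → ℝ)
    (hT : IsDemisubmartingale μ T)
    (φ : ℝ → ℝ)
    (hφ_nonneg : ∀ x, 0 ≤ φ x)
    (hφ_mono : Monotone φ)
    (hφ_convex : ConvexOn ℝ Set.univ φ)
    (hφ_int : ∀ k, 1 ≤ k → Integrable (fun ω => φ (T k ω)) μ)
    (hφT0 : ∫ ω, φ (T 0 ω) ∂μ = 0)
    (χ : ℝ → ℝ)
    (hχ_pos : ∀ b : ℝ, 0 < b → 0 < χ b)
    (hχ_mono : ∀ a b : ℝ, 0 < a → a ≤ b → χ a ≤ χ b)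
    (n : ℕ) (b : ℕ → ℝ)
    (hb0 : b 0 = 0) (hb1 : 0 < b 1)
    (hb_mono : ∀ k, 1 ≤ k → k < n → b k ≤ b (k + 1)) :
    1 - ∑ k ∈ Finset.Icc 1 n,
        ((∫ ω, φ (T k ω) ∂μ) - (∫ ω, φ (T (k - 1) ω) ∂μ)) / χ (b k)
      ≤ (μ {ω | ∀ k, 1 ≤ k → k ≤ n → φ (T k ω) ≤ χ (b k)}).toReal := by
  classical
  -- trivial case n = 0
  rcases Nat.eq_zero_or_pos n with rfl | hn
  · have hset : {ω : Ω | ∀ k, 1 ≤ k → k ≤ 0 → φ (T k ω) ≤ χ (b k)} = Set.univ := by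
      ext ω
      simp only [Set.mem_setOf_eq, Set.mem_univ, iff_true]
      intro k h1 h0
      omega
    rw [hset]
    simp
  -- positivity of the b's and χ's
  have hbge : ∀ k, 1 ≤ k → k ≤ n → b 1 ≤ b k := by
    intro k hk
    induction k, hk using Nat.le_induction with
    | base => intro _; exact le_rfl
    | succ m hm ih => intro h; exact (ih (by omega)).trans (hb_mono m hm (by omega))
  have hbpos : ∀ k, 1 ≤ k → k ≤ n → 0 < b k := fun k h1 h2 => lt_of_lt_of_le hb1 (hbge k h1 h2)
  have hcpos : ∀ k, 1 ≤ k → k ≤ n → 0 < χ (b k) := fun k h1 h2 => hχ_pos _ (hbpos k h1 h2)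
  classical
  have hTm : ∀ j, 1 ≤ j → AEStronglyMeasurable (T j) μ := fun j hj => (hT.1 j hj).1
  set T' : ℕ → Ω → ℝ := fun j => if h : 1 ≤ j then (hTm j h).mk (T j) else T 0 with hT'
  have hT'meas : ∀ j, 1 ≤ j → Measurable (T' j) := by
    intro j hj
    simp only [hT', dif_pos hj]
    exact (hTm j hj).stronglyMeasurable_mk.measurable
  have hT'ae : ∀ j, 1 ≤ j → T j =ᵐ[μ] T' j := by
    intro j hj
    simp only [hT', dif_pos hj]
    exact (hTm j hj).ae_eq_mk
  have hT'0 : T' 0 = T 0 := by simp [hT']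
  have hT'demi : IsDemisubmartingale μ T' := by
    constructor
    · intro j hj
      exact (hT.1 j hj).congr (hT'ae j hj)
    · intro j hj g hg hg0 hint
      have haej : ∀ᵐ ω ∂μ, ∀ i ∈ Finset.Icc 1 (j+1), T i ω = T' i ω := by
        have h := (ae_ball_iff (Finset.Icc 1 (j+1)).countable_toSet).2
          (fun i hi => hT'ae i (Finset.mem_Icc.1 (Finset.mem_coe.1 hi)).1)
        filter_upwards [h] with ω hω i hi
        exact hω i (Finset.mem_coe.2 hi)
      have heq : (fun ω => (T (j + 1) ω - T j ω) * g (fun i => T (i.val + 1) ω))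
          =ᵐ[μ] fun ω => (T' (j + 1) ω - T' j ω) * g (fun i => T' (i.val + 1) ω) := by
        filter_upwards [haej] with ω hω
        have h1 : T (j+1) ω = T' (j+1) ω := hω (j+1) (Finset.mem_Icc.2 ⟨by omega, le_rfl⟩)
        have h2 : T j ω = T' j ω := hω j (Finset.mem_Icc.2 ⟨hj, by omega⟩)
        have h3 : (fun i : Fin j => T (i.val + 1) ω) = fun i : Fin j => T' (i.val + 1) ω :=
          funext fun i => hω (i.val+1)
            (Finset.mem_Icc.2 ⟨by omega, by have := i.isLt; omega⟩)
        rw [h1, h2, h3]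
      have h0 := hT.2 j hj g hg hg0 (hint.congr heq.symm)
      calc (0:ℝ) ≤ _ := h0
        _ = _ := integral_congr_ae heq
  have hφae : ∀ k, 1 ≤ k →
      (fun ω => φ (T k ω)) =ᵐ[μ] fun ω => φ (T' k ω) := by
    intro k hk
    filter_upwards [hT'ae k hk] with ω h
    rw [h]
  have hφ_int' : ∀ k, 1 ≤ k → Integrable (fun ω => φ (T' k ω)) μ := fun k hk =>
    (hφ_int k hk).congr (hφae k hk)
  have hφT0' : ∫ ω, φ (T' 0 ω) ∂μ = 0 := by
    rw [hT'0]
    exact hφT0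
  have hmain := rao_aux μ T' hT'demi hT'meas φ hφ_nonneg hφ_mono hφ_convex hφ_int' hφT0'
    χ hχ_pos hχ_mono n b hb0 hb1 hb_mono
  have hsum : ∀ k ∈ Finset.Icc 1 n,
      ((∫ ω, φ (T' k ω) ∂μ) - ∫ ω, φ (T' (k-1) ω) ∂μ) / χ (b k)
        = ((∫ ω, φ (T k ω) ∂μ) - ∫ ω, φ (T (k-1) ω) ∂μ) / χ (b k) := by
    intro k hk
    have hk1 : 1 ≤ k := (Finset.mem_Icc.1 hk).1
    have h1 : (∫ ω, φ (T' k ω) ∂μ) = ∫ ω, φ (T k ω) ∂μ :=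
      (integral_congr_ae (hφae k hk1)).symm
    have h2 : (∫ ω, φ (T' (k-1) ω) ∂μ) = ∫ ω, φ (T (k-1) ω) ∂μ := by
      rcases Nat.eq_zero_or_pos (k-1) with h | h
      · rw [h, hT'0]
      · exact (integral_congr_ae (hφae (k-1) h)).symm
    rw [h1, h2]
  rw [Finset.sum_congr rfl hsum] at hmain
  have haen : ∀ᵐ ω ∂μ, ∀ j ∈ Finset.Icc 1 n, T j ω = T' j ω := by
    have h := (ae_ball_iff (Finset.Icc 1 n).countable_toSet).2
      (fun i hi => hT'ae i (Finset.mem_Icc.1 (Finset.mem_coe.1 hi)).1)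
    filter_upwards [h] with ω hω i hi
    exact hω i (Finset.mem_coe.2 hi)
  have hμeq : μ {ω | ∀ k, 1 ≤ k → k ≤ n → φ (T' k ω) ≤ χ (b k)}
      = μ {ω | ∀ k, 1 ≤ k → k ≤ n → φ (T k ω) ≤ χ (b k)} := by
    apply measure_congr
    rw [Filter.eventuallyEq_set]
    filter_upwards [haen] with ω hω
    constructor
    · intro h k h1 h2
      rw [hω k (Finset.mem_Icc.2 ⟨h1, h2⟩)]
      exact h k h1 h2
    · intro h k h1 h2
      rw [← hω k (Finset.mem_Icc.2 ⟨h1, h2⟩)]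
      exact h k h1 h2
  rw [hμeq] at hmain
  exact hmain
end

section
/- Let (Y_n)_{n≥1} be a nonnegative demisubmartingale with Y_k integrable for every k and the convention E[Y_0] = 0, let (c_k)_{1≤k≤n} be positive real numbers with c_1 ≤ c_2 ≤ … ≤ c_n, and let ε > 0. Then P( max_{1≤k≤n} Y_k/c_k ≥ ε ) ≤ ε^{−1} · Σ_{k=1}^n ( E[Y_k] − E[Y_{k−1}] ) / c_k. -/
/-!
Let `A k` be the event that `ε c_j ≤ Y_j` for some `1 ≤ j ≤ k`, and `φ k = ∫_{A k} Y_k`.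
On `A k \ A (k-1)` we have `Y_k ≥ ε c_k`, so
`ε c_k (P(A k) - P(A (k-1))) ≤ ∫_{A k} Y_k - ∫_{A (k-1)} Y_k ≤ φ k - φ (k-1)`,
the last step because `1_{A (k-1)}` is a nonnegative nondecreasing function of `Y_1, …, Y_{k-1}`,
so the demisubmartingale property applies to it. Dividing by `c_k` and telescoping bounds
`ε P(A n)` by `∑ (φ k - φ (k-1)) / c_k`. Finally `φ k ≤ E[Y_k]` because `Y_k ≥ 0`, and since
`1 / c_k` is nonincreasing, Abel summation lets us replace `φ` by `E[Y]`.
-/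

open MeasureTheory Filter

open Finset

theorem mul_le_sum_Icc_sub_mul {d w : ℕ → ℝ} (hd0 : d 0 = 0) :
    ∀ {n : ℕ}, (∀ k ∈ Icc 1 n, 0 ≤ d k) → (∀ k ∈ Ico 1 n, w (k + 1) ≤ w k) →
      d n * w n ≤ ∑ k ∈ Icc 1 n, (d k - d (k - 1)) * w k
  | 0, _, _ => by simp [hd0]
  | n + 1, hd, hw => by
    have ih := mul_le_sum_Icc_sub_mul hd0 (n := n)
      (fun k hk => hd k (Icc_subset_Icc_right n.le_succ hk))
      (fun k hk => hw k (Ico_subset_Ico_right n.le_succ hk))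
    have hdn : d n * w (n + 1) ≤ d n * w n := by
      rcases n.eq_zero_or_pos with rfl | hn
      · simp [hd0]
      · exact mul_le_mul_of_nonneg_left (hw n (by simp; omega)) (hd n (by simp; omega))
    rw [sum_Icc_succ_top (by omega), Nat.add_sub_cancel]
    linarith

theorem sum_Icc_sub_mul_le_of_antitone {a b w : ℕ → ℝ} {n : ℕ} (h0 : a 0 = b 0)
    (hab : ∀ k ∈ Icc 1 n, a k ≤ b k) (hw_nonneg : ∀ k ∈ Icc 1 n, 0 ≤ w k)
    (hw : ∀ k ∈ Ico 1 n, w (k + 1) ≤ w k) :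
    ∑ k ∈ Icc 1 n, (a k - a (k - 1)) * w k ≤ ∑ k ∈ Icc 1 n, (b k - b (k - 1)) * w k := by
  set d : ℕ → ℝ := fun k => b k - a k
  have hdn : 0 ≤ d n * w n := by
    rcases n.eq_zero_or_pos with rfl | hn
    · simp [d, h0]
    · have hn' : n ∈ Icc 1 n := by simp; omega
      exact mul_nonneg (sub_nonneg.2 (hab n hn')) (hw_nonneg n hn')
  have hsum := hdn.trans
    (mul_le_sum_Icc_sub_mul (by simp [d, h0]) (fun k hk => sub_nonneg.2 (hab k hk)) hw)
  have hsplit : ∑ k ∈ Icc 1 n, (b k - b (k - 1)) * w k - ∑ k ∈ Icc 1 n, (a k - a (k - 1)) * w k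
      = ∑ k ∈ Icc 1 n, (d k - d (k - 1)) * w k := by
    rw [← sum_sub_distrib]
    exact sum_congr rfl fun k _ => by ring
  linarith

theorem sum_Icc_sub_pred (D : ℕ → ℝ) : ∀ n, ∑ k ∈ Icc 1 n, (D k - D (k - 1)) = D n - D 0
  | 0 => by simp
  | n + 1 => by rw [sum_Icc_succ_top (by omega), sum_Icc_sub_pred D n, Nat.add_sub_cancel]; ring

section

variable {Ω : Type*} [MeasurableSpace Ω] {μ : Measure Ω}

theorem setIntegral_ge_of_const_le_real₀ {f : Ω → ℝ} {c : ℝ} {s : Set Ω}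
    (hs : NullMeasurableSet s μ) (hμs : μ s ≠ ⊤) (hf : ∀ x ∈ s, c ≤ f x)
    (hfint : IntegrableOn f s μ) : c * μ.real s ≤ ∫ x in s, f x ∂μ := by
  rw [mul_comm, ← smul_eq_mul, ← setIntegral_const]
  exact setIntegral_mono_ae_restrict (integrableOn_const hμs) hfint
    ((ae_restrict_mem₀ hs).mono hf)

theorem measureReal_sdiff₀ {s t : Set Ω} (hts : t ⊆ s) (ht : NullMeasurableSet t μ)
    (hs : μ s ≠ ⊤ := by finiteness) : μ.real (s \ t) = μ.real s - μ.real t := by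
  rw [← measureReal_inter_add_sdiff₀ ht hs, Set.inter_eq_right.2 hts]
  ring

end

section CrossingEvent

variable {Ω : Type*} {T : ℕ → Ω → ℝ} {b : ℕ → ℝ}

def crossingEvent (T : ℕ → Ω → ℝ) (b : ℕ → ℝ) (k : ℕ) : Set Ω :=
  {ω | ∃ j, 1 ≤ j ∧ j ≤ k ∧ b j ≤ T j ω}

@[simp]
theorem crossingEvent_zero : crossingEvent T b 0 = ∅ := by
  ext ω
  simp only [crossingEvent, Set.mem_ofPred_eq, Set.mem_empty_iff_false, iff_false]
  omega

theorem crossingEvent_succ (k : ℕ) :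
    crossingEvent T b (k + 1) = crossingEvent T b k ∪ {ω | b (k + 1) ≤ T (k + 1) ω} := by
  ext ω
  simp only [crossingEvent, Set.mem_union, Set.mem_ofPred_eq]
  constructor
  · rintro ⟨j, hj1, hjk, hj⟩
    rcases Nat.lt_or_ge j (k + 1) with hlt | hge
    · exact Or.inl ⟨j, hj1, by omega, hj⟩
    · exact Or.inr (by rwa [show j = k + 1 by omega] at hj)
  · rintro (⟨j, hj1, hjk, hj⟩ | h)
    · exact ⟨j, hj1, by omega, hj⟩
    · exact ⟨k + 1, by omega, le_rfl, h⟩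

theorem crossingEvent_mono (k : ℕ) : crossingEvent T b k ⊆ crossingEvent T b (k + 1) := by
  rw [crossingEvent_succ]
  exact Set.subset_union_left

theorem crossingEvent_eq_preimage (k : ℕ) :
    crossingEvent T b k
      = {ω | (fun i : Fin k => T (i + 1) ω) ∈ {y : Fin k → ℝ | ∃ i : Fin k, b (i + 1) ≤ y i}} := by
  ext ω
  simp only [crossingEvent, Set.mem_ofPred_eq]
  constructor
  · rintro ⟨j, hj1, hjk, hj⟩
    exact ⟨⟨j - 1, by omega⟩, by simpa [Nat.sub_add_cancel hj1] using hj⟩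
  · rintro ⟨i, hi⟩
    exact ⟨i + 1, by omega, i.isLt, hi⟩

theorem nullMeasurableSet_crossingEvent [MeasurableSpace Ω] {μ : Measure Ω}
    (hT : ∀ j, 1 ≤ j → AEMeasurable (T j) μ) :
    ∀ k, NullMeasurableSet (crossingEvent T b k) μ
  | 0 => by simp
  | k + 1 => by
    rw [crossingEvent_succ]
    exact (nullMeasurableSet_crossingEvent hT k).union
      (nullMeasurableSet_le aemeasurable_const (hT (k + 1) (by omega)))

end CrossingEvent

section Demisubmartingale

variable {Ω : Type*} [MeasurableSpace Ω] {μ : Measure Ω} {T : ℕ → Ω → ℝ}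

theorem IsDemisubmartingale.setIntegral_le_of_isUpperSet
    (hT : IsDemisubmartingale μ T) {j : ℕ} (hj : 1 ≤ j) {U : Set (Fin j → ℝ)}
    (hU : IsUpperSet U) (hs : NullMeasurableSet {ω | (fun i : Fin j => T (i + 1) ω) ∈ U} μ) :
    ∫ ω in {ω | (fun i : Fin j => T (i + 1) ω) ∈ U}, T j ω ∂μ
      ≤ ∫ ω in {ω | (fun i : Fin j => T (i + 1) ω) ∈ U}, T (j + 1) ω ∂μ := by
  set s := {ω | (fun i : Fin j => T (i + 1) ω) ∈ U}
  have hg_mono : Monotone (U.indicator fun _ => (1 : ℝ)) := by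
    intro y z hyz
    by_cases hy : y ∈ U
    · simp [hy, hU hyz hy]
    · simp [hy, Set.indicator_nonneg]
  have hprod : (fun ω => (T (j + 1) ω - T j ω)
        * U.indicator (fun _ => (1 : ℝ)) (fun i : Fin j => T (i + 1) ω))
      = s.indicator (fun ω => T (j + 1) ω - T j ω) := by
    ext ω
    by_cases hω : ω ∈ s <;> simp_all [s]
  have hTj := hT.1 j hj
  have hTj1 := hT.1 (j + 1) (by omega)
  have := hT.2 j hj _ hg_mono (Set.indicator_nonneg (by simp)) (by
    rw [hprod]; exact (hTj1.sub hTj).indicator₀ hs)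
  rw [hprod, integral_indicator₀ hs, integral_sub hTj1.integrableOn hTj.integrableOn] at this
  linarith

theorem IsDemisubmartingale.setIntegral_crossingEvent_le (hT : IsDemisubmartingale μ T)
    (b : ℕ → ℝ) (k : ℕ) :
    ∫ ω in crossingEvent T b k, T k ω ∂μ ≤ ∫ ω in crossingEvent T b k, T (k + 1) ω ∂μ := by
  rcases k.eq_zero_or_pos with rfl | hk
  · simp
  have hA := nullMeasurableSet_crossingEvent (b := b) (fun j hj => (hT.1 j hj).aemeasurable) k
  rw [crossingEvent_eq_preimage] at hA ⊢
  refine hT.setIntegral_le_of_isUpperSet hk ?_ hA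
  rintro y z hyz ⟨i, hi⟩
  exact ⟨i, hi.trans (hyz i)⟩

theorem IsDemisubmartingale.mul_measureReal_crossingEvent_sub_le [IsFiniteMeasure μ]
    (hT : IsDemisubmartingale μ T) (b : ℕ → ℝ) (k : ℕ) :
    b (k + 1) * (μ.real (crossingEvent T b (k + 1)) - μ.real (crossingEvent T b k))
      ≤ ∫ ω in crossingEvent T b (k + 1), T (k + 1) ω ∂μ
        - ∫ ω in crossingEvent T b k, T k ω ∂μ := by
  have hA := nullMeasurableSet_crossingEvent (b := b) (fun j hj => (hT.1 j hj).aemeasurable)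
  have hint := (hT.1 (k + 1) (by omega)).integrableOn (s := crossingEvent T b (k + 1))
  have hsub := crossingEvent_mono (T := T) (b := b) k
  have hnew : ∀ ω ∈ crossingEvent T b (k + 1) \ crossingEvent T b k, b (k + 1) ≤ T (k + 1) ω := by
    rintro ω ⟨hω, hω'⟩
    rw [crossingEvent_succ] at hω
    exact hω.resolve_left hω'
  calc b (k + 1) * (μ.real (crossingEvent T b (k + 1)) - μ.real (crossingEvent T b k))
      = b (k + 1) * μ.real (crossingEvent T b (k + 1) \ crossingEvent T b k) := by
        rw [measureReal_sdiff₀ hsub (hA k)]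
    _ ≤ ∫ ω in crossingEvent T b (k + 1) \ crossingEvent T b k, T (k + 1) ω ∂μ :=
        setIntegral_ge_of_const_le_real₀ ((hA (k + 1)).diff (hA k)) (measure_ne_top μ _) hnew
          (hint.mono_set Set.sdiff_subset)
    _ = ∫ ω in crossingEvent T b (k + 1), T (k + 1) ω ∂μ
          - ∫ ω in crossingEvent T b k, T (k + 1) ω ∂μ := setIntegral_sdiff₀ (hA k) hint hsub
    _ ≤ _ := by linarith [hT.setIntegral_crossingEvent_le b k]

end Demisubmartingale

theorem maximal_inequality_nonneg_demisubmartingale_general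
    {Ω : Type*} [MeasurableSpace Ω] (μ : Measure Ω) [IsProbabilityMeasure μ]
    (Y : ℕ → Ω → ℝ)
    (hY : IsDemisubmartingale μ Y)
    (hY_nonneg : ∀ n ω, 0 ≤ Y n ω)
    (hY0 : ∫ ω, Y 0 ω ∂μ = 0)
    (n : ℕ) (c : ℕ → ℝ)
    (hc_pos : ∀ k, 1 ≤ k → k ≤ n → 0 < c k)
    (hc_mono : ∀ k, 1 ≤ k → k < n → c k ≤ c (k + 1))
    (ε : ℝ) (hε : 0 < ε) :
    (μ {ω | ∃ k, 1 ≤ k ∧ k ≤ n ∧ ε ≤ Y k ω / c k}).toReal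
      ≤ ε⁻¹ * ∑ k ∈ Finset.Icc 1 n,
          ((∫ ω, Y k ω ∂μ) - (∫ ω, Y (k - 1) ω ∂μ)) / c k := by
  set A := crossingEvent Y fun k => ε * c k
  set φ : ℕ → ℝ := fun k => ∫ ω in A k, Y k ω ∂μ
  have hevent : {ω | ∃ k, 1 ≤ k ∧ k ≤ n ∧ ε ≤ Y k ω / c k} = A n := by
    ext ω
    refine exists_congr fun k => and_congr_right fun hk => and_congr_right fun hkn => ?_
    exact le_div_iff₀ (hc_pos k hk hkn)
  have hstep : ∀ k ∈ Icc 1 n,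
      ε * (μ.real (A k) - μ.real (A (k - 1))) ≤ (φ k - φ (k - 1)) / c k := by
    intro k hk
    obtain ⟨hk1, hkn⟩ := mem_Icc.1 hk
    obtain ⟨j, rfl⟩ := Nat.exists_eq_add_of_le' hk1
    have := hY.mul_measureReal_crossingEvent_sub_le (fun k => ε * c k) j
    rw [le_div_iff₀ (hc_pos _ hk1 hkn), Nat.add_sub_cancel]
    linarith
  have habel : ∑ k ∈ Icc 1 n, (φ k - φ (k - 1)) * (c k)⁻¹
      ≤ ∑ k ∈ Icc 1 n, ((∫ ω, Y k ω ∂μ) - ∫ ω, Y (k - 1) ω ∂μ) * (c k)⁻¹ :=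
    sum_Icc_sub_mul_le_of_antitone (by simp [φ, A, hY0])
      (fun k hk => setIntegral_le_integral (hY.1 k (mem_Icc.1 hk).1)
        (Eventually.of_forall (hY_nonneg k)))
      (fun k hk => inv_nonneg.2 (hc_pos k (mem_Icc.1 hk).1 (mem_Icc.1 hk).2).le)
      (fun k hk => by
        obtain ⟨hk1, hkn⟩ := mem_Ico.1 hk
        exact inv_anti₀ (hc_pos k hk1 hkn.le) (hc_mono k hk1 hkn))
  calc (μ {ω | ∃ k, 1 ≤ k ∧ k ≤ n ∧ ε ≤ Y k ω / c k}).toReal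
      = ε⁻¹ * ∑ k ∈ Icc 1 n, ε * (μ.real (A k) - μ.real (A (k - 1))) := by
        rw [← mul_sum, sum_Icc_sub_pred, inv_mul_cancel_left₀ hε.ne', hevent]
        simp [A, measureReal_def]
    _ ≤ ε⁻¹ * ∑ k ∈ Icc 1 n, (φ k - φ (k - 1)) / c k := by gcongr with k hk; exact hstep k hk
    _ ≤ _ := by
        simpa only [div_eq_mul_inv] using mul_le_mul_of_nonneg_left habel (inv_nonneg.2 hε.le)

/-- **Maximal inequality for nonnegative demisubmartingales**: if `(Y_n)` is a
nonnegative demisubmartingale (with the convention `E[Y_0] = 0`), `0 < c_1 ≤ … ≤ c_n`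
and `ε > 0`, then `P(max_{1≤k≤n} Y_k/c_k ≥ ε) ≤ ε⁻¹ Σ_{k=1}^n (E[Y_k] - E[Y_{k-1}])/c_k`.
The event `max_{1≤k≤n} Y_k/c_k ≥ ε` is expressed as the existence of some `1 ≤ k ≤ n`
with `Y_k/c_k ≥ ε`. -/
theorem maximal_inequality_nonneg_demisubmartingale
    {Ω : Type*} [MeasurableSpace Ω] (μ : Measure Ω) [IsProbabilityMeasure μ]
    (Y : ℕ → Ω → ℝ)
    (hY : IsDemisubmartingale μ Y)
    (hY_nonneg : ∀ n ω, 0 ≤ Y n ω)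
    (hY_int : ∀ k, 1 ≤ k → Integrable (Y k) μ)
    (hY0 : ∫ ω, Y 0 ω ∂μ = 0)
    (n : ℕ) (c : ℕ → ℝ)
    (hc_pos : ∀ k, 1 ≤ k → k ≤ n → 0 < c k)
    (hc_mono : ∀ k, 1 ≤ k → k < n → c k ≤ c (k + 1))
    (ε : ℝ) (hε : 0 < ε) :
    (μ {ω | ∃ k, 1 ≤ k ∧ k ≤ n ∧ ε ≤ Y k ω / c k}).toReal
      ≤ ε⁻¹ * ∑ k ∈ Finset.Icc 1 n,
          ((∫ ω, Y k ω ∂μ) - (∫ ω, Y (k - 1) ω ∂μ)) / c k :=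
  maximal_inequality_nonneg_demisubmartingale_general μ Y hY hY_nonneg hY0 n c hc_pos hc_mono ε hε
end

section
/- Let (α_k)_{k≥1} be a sequence of nonnegative real numbers, r > 0, and (b_k)_{k≥1} a nondecreasing unbounded sequence of positive real numbers. Assume Σ_{k=1}^∞ α_k b_k^{−r} < ∞ and that there exists c > 0 such that for every n ≥ 1 and every ε > 0, P( max_{1≤k≤n} |S_k| ≥ ε ) ≤ c ε^{−r} Σ_{k=1}^n α_k. Then S_n/b_n → 0 almost surely as n → ∞. -/
/-!
Cut the indices into dyadic blocks according to the size of `b`. For `ε > 0`, the maximal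
inequality bounds the probability that `|S_k| ≥ ε 2^j` for some `k` with `b_k < 2^j` by
`c ε^{-r} 2^{-jr} ∑_{b_k < 2^j} α_k`. Summing over `j` and exchanging the sums, each `α_k`
collects the geometric tail `∑_{2^j > b_k} 2^{-jr} ≤ b_k^{-r} / (1 - 2^{-r})`, so the series
converges. By Borel–Cantelli, almost surely `|S_k| < ε 2^j` whenever `b_k < 2^j`, for all large
`j`; taking `2^{j-1} ≤ b_n < 2^j` gives `|S_n| < 2 ε b_n`.
-/

open MeasureTheory Filter
open scoped ENNReal Topology

theorem Monotone.exists_forall_lt_iff_lt {β : Type*} [LinearOrder β] {b : ℕ → β}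
    (hb : Monotone b) (hb_top : Tendsto b atTop atTop) (x : β) :
    ∃ n, ∀ k, k < n ↔ b k < x := by
  classical
  have h : ∃ n, x ≤ b n := (hb_top.eventually_ge_atTop x).exists
  refine ⟨Nat.find h, fun k => ?_⟩
  rw [Nat.lt_find_iff]
  exact ⟨fun H => not_le.1 (H k le_rfl), fun hk m hm => not_le.2 ((hb hm).trans_lt hk)⟩

theorem tsum_indicator_lt_pow_le {x y r : ℝ} (hx : 0 < x) (hy : 1 < y) (hr : 0 ≤ r) :
    ∑' j : ℕ, {j : ℕ | x < y ^ j}.indicator (fun j => ENNReal.ofReal (y ^ (-r)) ^ j) j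
      ≤ ENNReal.ofReal (x ^ (-r)) * (1 - ENNReal.ofReal (y ^ (-r)))⁻¹ := by
  classical
  have h : ∃ t : ℕ, x < y ^ t := pow_unbounded_of_one_lt x hy
  set t := Nat.find h
  have hsupp : Function.support ({j : ℕ | x < y ^ j}.indicator
      fun j => ENNReal.ofReal (y ^ (-r)) ^ j) ⊆ Set.range (· + t) := by
    intro j hj
    have hj' : j ∈ {j : ℕ | x < y ^ j} := Set.mem_of_indicator_ne_zero hj
    exact ⟨j - t, Nat.sub_add_cancel (Nat.find_min' h hj')⟩
  have hyt : (y ^ t) ^ (-r) ≤ x ^ (-r) :=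
    Real.rpow_le_rpow_of_nonpos hx (Nat.find_spec h).le (neg_nonpos.2 hr)
  calc ∑' j : ℕ, {j : ℕ | x < y ^ j}.indicator (fun j => ENNReal.ofReal (y ^ (-r)) ^ j) j
      = ∑' i : ℕ, {j : ℕ | x < y ^ j}.indicator (fun j => ENNReal.ofReal (y ^ (-r)) ^ j) (i + t) :=
        ((add_left_injective t).tsum_eq hsupp).symm
    _ ≤ ∑' i : ℕ, ENNReal.ofReal (y ^ (-r)) ^ t * ENNReal.ofReal (y ^ (-r)) ^ i :=
        ENNReal.tsum_le_tsum fun i => (Set.indicator_le_self _ _ _).trans_eq (by ring)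
    _ = ENNReal.ofReal ((y ^ t) ^ (-r)) * (1 - ENNReal.ofReal (y ^ (-r)))⁻¹ := by
        rw [ENNReal.tsum_mul_left, ENNReal.tsum_geometric, ← ENNReal.ofReal_pow
          (Real.rpow_nonneg (by linarith) _), Real.rpow_pow_comm (by linarith)]
    _ ≤ ENNReal.ofReal (x ^ (-r)) * (1 - ENNReal.ofReal (y ^ (-r)))⁻¹ := by gcongr

theorem ae_tendsto_zero_of_forall_ae_eventually_abs_lt {Ω ι : Type*} [MeasurableSpace Ω]
    {μ : Measure Ω} {l : Filter ι} {f : ι → Ω → ℝ}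
    (h : ∀ ε > 0, ∀ᵐ ω ∂μ, ∀ᶠ n in l, |f n ω| < ε) :
    ∀ᵐ ω ∂μ, Tendsto (f · ω) l (𝓝 0) := by
  have h' := ae_all_iff.2 fun q : ℕ => h (1 / (q + 1)) Nat.one_div_pos_of_nat
  filter_upwards [h'] with ω hω
  refine Metric.tendsto_nhds.2 fun ε hε => ?_
  obtain ⟨q, hq⟩ := exists_nat_one_div_lt hε
  filter_upwards [hω q] with n hn
  exact (Real.dist_0_eq_abs _).trans_lt (hn.trans hq)

section Dyadic

variable {Ω : Type*} [MeasurableSpace Ω] {μ : Measure Ω} {S : ℕ → Ω → ℝ} {α b : ℕ → ℝ} {r c : ℝ}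

variable (μ S α r c) in
def MaximalInequality : Prop :=
  ∀ n ε, 0 < ε → μ {ω | ∃ k < n, ε ≤ |S k ω|}
    ≤ ENNReal.ofReal (c * ε ^ (-r) * ∑ k ∈ Finset.range n, α k)

theorem measure_exists_lt_le_of_maximal_inequality (hα : ∀ k, 0 ≤ α k) (hb_mono : Monotone b)
    (hb_top : Tendsto b atTop atTop)
    (h_max : MaximalInequality μ S α r c)
    (x : ℝ) {ε : ℝ} (hε : 0 < ε) :
    μ {ω | ∃ k, b k < x ∧ ε ≤ |S k ω|}
      ≤ ENNReal.ofReal (c * ε ^ (-r)) *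
        ∑' k, {k | b k < x}.indicator (fun k => ENNReal.ofReal (α k)) k := by
  obtain ⟨n, hn⟩ := hb_mono.exists_forall_lt_iff_lt hb_top x
  have hindex : {k | b k < x} = ↑(Finset.range n) := by ext k; simp [hn]
  have hevent : {ω | ∃ k, b k < x ∧ ε ≤ |S k ω|} = {ω | ∃ k < n, ε ≤ |S k ω|} := by
    simp only [hn]
  rw [hevent, hindex, ← sum_eq_tsum_indicator,
    ← ENNReal.ofReal_sum_of_nonneg fun k _ => hα k,
    ← ENNReal.ofReal_mul' (Finset.sum_nonneg fun k _ => hα k)]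
  exact h_max n ε hε

theorem tsum_measure_exists_lt_two_pow_ne_top (hα : ∀ k, 0 ≤ α k) (hr : 0 < r)
    (hb_pos : ∀ k, 0 < b k) (hb_mono : Monotone b) (hb_top : Tendsto b atTop atTop)
    (h_sum : Summable fun k => α k * b k ^ (-r))
    (h_max : MaximalInequality μ S α r c)
    {ε : ℝ} (hε : 0 < ε) :
    ∑' j : ℕ, μ {ω | ∃ k, b k < 2 ^ j ∧ ε * 2 ^ j ≤ |S k ω|} ≠ ∞ := by
  set q := ENNReal.ofReal (2 ^ (-r))
  set K := ENNReal.ofReal (c * ε ^ (-r))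
  have hq : q < 1 :=
    ENNReal.ofReal_lt_one.2 (Real.rpow_lt_one_of_one_lt_of_neg one_lt_two (neg_lt_zero.2 hr))
  have hscale : ∀ j : ℕ, ENNReal.ofReal (c * (ε * 2 ^ j) ^ (-r)) = K * q ^ j := fun j => by
    rw [Real.mul_rpow hε.le (by positivity), ← Real.rpow_pow_comm zero_le_two, ← mul_assoc,
      ENNReal.ofReal_mul' (by positivity), ENNReal.ofReal_pow (by positivity)]
  have hswap : ∀ j k, q ^ j * {k | b k < 2 ^ j}.indicator (fun k => ENNReal.ofReal (α k)) k
      = ENNReal.ofReal (α k) * {j : ℕ | b k < 2 ^ j}.indicator (q ^ ·) j := fun j k => by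
    by_cases h : b k < 2 ^ j <;> simp [h, mul_comm]
  refine ne_top_of_le_ne_top
    (b := K * (ENNReal.ofReal (∑' k, α k * b k ^ (-r)) * (1 - q)⁻¹))
    (by finiteness [(tsub_pos_iff_lt.2 hq).ne']) ?_
  calc ∑' j : ℕ, μ {ω | ∃ k, b k < 2 ^ j ∧ ε * 2 ^ j ≤ |S k ω|}
      ≤ ∑' j : ℕ, K *
          ∑' k, q ^ j * {k | b k < 2 ^ j}.indicator (fun k => ENNReal.ofReal (α k)) k := by
        refine ENNReal.tsum_le_tsum fun j => ?_
        rw [ENNReal.tsum_mul_left, ← mul_assoc, ← hscale]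
        exact measure_exists_lt_le_of_maximal_inequality hα hb_mono hb_top h_max _ (by positivity)
    _ = K * ∑' k, ENNReal.ofReal (α k) * ∑' j : ℕ, {j : ℕ | b k < 2 ^ j}.indicator (q ^ ·) j := by
        rw [ENNReal.tsum_mul_left]
        simp_rw [hswap]
        rw [ENNReal.tsum_comm]
        simp_rw [ENNReal.tsum_mul_left]
    _ ≤ K * ∑' k, ENNReal.ofReal (α k) * (ENNReal.ofReal (b k ^ (-r)) * (1 - q)⁻¹) := by
        gcongr with k
        exact tsum_indicator_lt_pow_le (hb_pos k) one_lt_two hr.le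
    _ = K * (ENNReal.ofReal (∑' k, α k * b k ^ (-r)) * (1 - q)⁻¹) := by
        rw [ENNReal.ofReal_tsum_of_nonneg
          (fun k => mul_nonneg (hα k) (Real.rpow_nonneg (hb_pos k).le _)) h_sum,
          ← ENNReal.tsum_mul_right]
        simp_rw [← mul_assoc, ENNReal.ofReal_mul (hα _)]

theorem ae_eventually_abs_lt_two_mul_of_maximal_inequality (hα : ∀ k, 0 ≤ α k) (hr : 0 < r)
    (hb_pos : ∀ k, 0 < b k) (hb_mono : Monotone b) (hb_top : Tendsto b atTop atTop)
    (h_sum : Summable fun k => α k * b k ^ (-r))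
    (h_max : MaximalInequality μ S α r c)
    {ε : ℝ} (hε : 0 < ε) :
    ∀ᵐ ω ∂μ, ∀ᶠ n in atTop, |S n ω| < 2 * ε * b n := by
  filter_upwards [ae_eventually_notMem
    (tsum_measure_exists_lt_two_pow_ne_top hα hr hb_pos hb_mono hb_top h_sum h_max hε)] with ω hω
  obtain ⟨J, hJ⟩ := eventually_atTop.1 hω
  filter_upwards [hb_top.eventually_ge_atTop (2 ^ J)] with n hn
  obtain ⟨i, hi, hi'⟩ := exists_nat_pow_near ((one_le_pow₀ one_le_two).trans hn) one_lt_two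
  have hJi : J ≤ i + 1 := ((pow_lt_pow_iff_right₀ one_lt_two).1 (hn.trans_lt hi')).le
  have hSn := hJ (i + 1) hJi
  simp only [not_exists, not_and, not_le] at hSn
  calc |S n ω| < ε * 2 ^ (i + 1) := hSn n hi'
    _ = 2 * ε * 2 ^ i := by ring
    _ ≤ 2 * ε * b n := by gcongr

theorem ae_tendsto_div_zero_of_maximal_inequality (hα : ∀ k, 0 ≤ α k) (hr : 0 < r)
    (hb_pos : ∀ k, 0 < b k) (hb_mono : Monotone b) (hb_top : Tendsto b atTop atTop)
    (h_sum : Summable fun k => α k * b k ^ (-r))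
    (h_max : MaximalInequality μ S α r c) :
    ∀ᵐ ω ∂μ, Tendsto (fun n => S n ω / b n) atTop (𝓝 0) := by
  refine ae_tendsto_zero_of_forall_ae_eventually_abs_lt fun ε hε => ?_
  filter_upwards [ae_eventually_abs_lt_two_mul_of_maximal_inequality hα hr hb_pos hb_mono hb_top
    h_sum h_max (half_pos hε)] with ω hω
  filter_upwards [hω] with n hn
  rw [abs_div, abs_of_pos (hb_pos n), div_lt_iff₀ (hb_pos n)]
  linarith

end Dyadic

theorem tomacs_libor_slln_general
    {Ω : Type*} [MeasurableSpace Ω] (μ : Measure Ω) [IsProbabilityMeasure μ]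
    (S : ℕ → Ω → ℝ)
    (α : ℕ → ℝ) (hα_nonneg : ∀ k, 1 ≤ k → 0 ≤ α k)
    (r : ℝ) (hr : 0 < r)
    (b : ℕ → ℝ)
    (hb_pos : ∀ k, 1 ≤ k → 0 < b k)
    (hb_mono : ∀ k, 1 ≤ k → b k ≤ b (k + 1))
    (hb_top : Tendsto b atTop atTop)
    (h_sum : Summable (fun k : ℕ => α (k + 1) * b (k + 1) ^ (-r)))
    (h_max : ∃ c : ℝ, 0 < c ∧ ∀ n : ℕ, 1 ≤ n → ∀ ε : ℝ, 0 < ε →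
      (μ {ω | ∃ k, 1 ≤ k ∧ k ≤ n ∧ ε ≤ |S k ω|}).toReal
        ≤ c * ε ^ (-r) * ∑ k ∈ Finset.Icc 1 n, α k) :
    ∀ᵐ ω ∂μ, Tendsto (fun n => S n ω / b n) atTop (nhds 0) := by
  obtain ⟨c, -, h_max⟩ := h_max
  have h_max_shift : MaximalInequality μ (fun k => S (k + 1)) (fun k => α (k + 1)) r c := by
    intro n ε hε
    rcases Nat.eq_zero_or_pos n with rfl | hn
    · simp
    have hevent : {ω | ∃ k < n, ε ≤ |S (k + 1) ω|}
        = {ω | ∃ k, 1 ≤ k ∧ k ≤ n ∧ ε ≤ |S k ω|} := Set.ext fun ω =>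
      ⟨fun ⟨k, hk, hS⟩ => ⟨k + 1, by omega, by omega, hS⟩,
        fun ⟨k, hk1, hkn, hS⟩ => ⟨k - 1, by omega, by rwa [Nat.sub_add_cancel hk1]⟩⟩
    rw [hevent, Finset.range_eq_Ico, Finset.sum_Ico_add', zero_add,
      Finset.Ico_add_one_right_eq_Icc, ← ENNReal.ofReal_toReal (measure_ne_top μ _)]
    exact ENNReal.ofReal_le_ofReal (h_max n hn ε hε)
  filter_upwards [ae_tendsto_div_zero_of_maximal_inequality (fun k => hα_nonneg _ k.succ_pos) hr
    (fun k => hb_pos _ k.succ_pos) (monotone_nat_of_le_succ fun k => hb_mono _ k.succ_pos)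
    (hb_top.comp (tendsto_add_atTop_nat 1)) h_sum h_max_shift] with ω hω
  exact (tendsto_add_atTop_iff_nat 1).1 hω

/-- **Tómács–Libor lemma** (Theorem 2.4 of Tómács–Libor): if `(α_k)_{k≥1}` are
nonnegative reals, `r > 0`, `(b_k)_{k≥1}` is a nondecreasing unbounded sequence of
positive reals, `Σ_{k=1}^∞ α_k b_k^{-r} < ∞`, and there is `c > 0` such that for all
`n ≥ 1` and `ε > 0`, `P(max_{1≤k≤n} |S_k| ≥ ε) ≤ c ε^{-r} Σ_{k=1}^n α_k`, then
`S_n / b_n → 0` almost surely. Here `S k = Σ_{i=1}^k X_i` and the event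
`max_{1≤k≤n} |S_k| ≥ ε` is expressed as the existence of some `1 ≤ k ≤ n` with
`|S_k| ≥ ε`; `x ^ r` denotes the real power `Real.rpow`. -/
theorem tomacs_libor_slln
    {Ω : Type*} [MeasurableSpace Ω] (μ : Measure Ω) [IsProbabilityMeasure μ]
    (X S : ℕ → Ω → ℝ)
    (hXmeas : ∀ i, 1 ≤ i → Measurable (X i))
    (hS : ∀ k ω, S k ω = ∑ i ∈ Finset.Icc 1 k, X i ω)
    (α : ℕ → ℝ) (hα_nonneg : ∀ k, 1 ≤ k → 0 ≤ α k)
    (r : ℝ) (hr : 0 < r)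
    (b : ℕ → ℝ)
    (hb_pos : ∀ k, 1 ≤ k → 0 < b k)
    (hb_mono : ∀ k, 1 ≤ k → b k ≤ b (k + 1))
    (hb_top : Tendsto b atTop atTop)
    (h_sum : Summable (fun k : ℕ => α (k + 1) * b (k + 1) ^ (-r)))
    (h_max : ∃ c : ℝ, 0 < c ∧ ∀ n : ℕ, 1 ≤ n → ∀ ε : ℝ, 0 < ε →
      (μ {ω | ∃ k, 1 ≤ k ∧ k ≤ n ∧ ε ≤ |S k ω|}).toReal
        ≤ c * ε ^ (-r) * ∑ k ∈ Finset.Icc 1 n, α k) :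
    ∀ᵐ ω ∂μ, Tendsto (fun n => S n ω / b n) atTop (nhds 0) :=
  tomacs_libor_slln_general μ S α hα_nonneg r hr b hb_pos hb_mono hb_top h_sum h_max
end

section
/- Let (S_n)_{n≥1} be a demimartingale with the convention S_0 = 0 and E[|S_0|^r] = 0, let r ≥ 1 be such that |S_k|^r is integrable for every k, let (b_k)_{1≤k≤n} be positive nondecreasing real numbers, and let ε > 0. Then P( max_{1≤k≤n} |S_k|/b_k ≥ ε ) ≤ ε^{−r} · Σ_{k=1}^n ( E[|S_k|^r] − E[|S_{k−1}|^r] ) / b_k^r. -/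
open MeasureTheory Filter

/-!
Since `-S` is again a demimartingale and `|x| ^ r = x⁺ ^ r + (-x)⁺ ^ r`, it suffices to bound
`ε ^ r P(S_k ≥ ε b_k for some k ≤ n)` by the same sum with `Y_k = (S_k⁺) ^ r` in place of
`|S_k| ^ r`. Let `A_k` be the event that the level is reached by time `k`. Testing the
demimartingale property against the monotone function `1_{A_j} φ'(S_j)`, where `φ(x) = x⁺ ^ r`
is convex and nondecreasing, gives `E[Y_j; A_j] ≤ E[Y_{j+1}; A_j]`. On `A_k \ A_{k-1}` we have
`Y_k ≥ ε ^ r b_k ^ r`, so decomposing `A_n` by the first passage time bounds `ε ^ r P(A_n)` by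
`∑ (E[Y_k; A_k] - E[Y_{k-1}; A_{k-1}]) / b_k ^ r`, and Abel summation, using that `b` is
nondecreasing, replaces the restricted expectations by the full ones.
-/

/-- A subgradient of the convex function `x ↦ x⁺ ^ r`. It is not written `r * x⁺ ^ (r - 1)`,
which for `r = 1` equals `1` on `x < 0`, because `0 ^ 0 = 1`. -/
noncomputable def rpowPosPartDeriv (r : ℝ) : ℝ → ℝ :=
  (Set.Ioi 0).indicator fun x => r * x ^ (r - 1)

lemma rpowPosPartDeriv_nonneg {r : ℝ} (hr : 0 ≤ r) (x : ℝ) : 0 ≤ rpowPosPartDeriv r x :=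
  Set.indicator_nonneg (fun _ hx => mul_nonneg hr (Real.rpow_nonneg (le_of_lt hx) _)) x

lemma monotone_rpowPosPartDeriv {r : ℝ} (hr : 1 ≤ r) : Monotone (rpowPosPartDeriv r) := by
  intro x y hxy
  rcases lt_or_ge 0 x with hx | hx
  · have hy : 0 < y := hx.trans_le hxy
    rw [rpowPosPartDeriv, Set.indicator_of_mem (Set.mem_Ioi.2 hx),
      Set.indicator_of_mem (Set.mem_Ioi.2 hy)]
    gcongr
  · rw [rpowPosPartDeriv, Set.indicator_of_notMem (Set.notMem_Ioi.2 hx)]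
    exact rpowPosPartDeriv_nonneg (by linarith) y

lemma abs_rpowPosPartDeriv_le {r : ℝ} (hr : 0 ≤ r) (x : ℝ) :
    |rpowPosPartDeriv r x| ≤ r * |x| ^ (r - 1) := by
  rw [abs_of_nonneg (rpowPosPartDeriv_nonneg hr x)]
  rcases lt_or_ge 0 x with hx | hx
  · rw [rpowPosPartDeriv, Set.indicator_of_mem (Set.mem_Ioi.2 hx), abs_of_pos hx]
  · rw [rpowPosPartDeriv, Set.indicator_of_notMem (Set.notMem_Ioi.2 hx)]
    positivity

lemma measurable_rpowPosPartDeriv (r : ℝ) : Measurable (rpowPosPartDeriv r) :=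
  (measurable_const.mul (measurable_id.pow_const _)).indicator measurableSet_Ioi

lemma sub_mul_rpowPosPartDeriv_le {r : ℝ} (hr : 1 ≤ r) (x y : ℝ) :
    (y - x) * rpowPosPartDeriv r x ≤ y⁺ ^ r - x⁺ ^ r := by
  rw [mul_comm]
  have hr0 : r ≠ 0 := by positivity
  rcases lt_or_ge 0 x with hx | hx
  · rw [rpowPosPartDeriv, Set.indicator_of_mem (Set.mem_Ioi.2 hx), posPart_eq_self.2 hx.le]
    set z := y⁺
    have hz : 0 ≤ z := posPart_nonneg y
    have bernoulli := one_add_mul_self_le_rpow_one_add (s := z / x - 1) (by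
      have := div_nonneg hz hx.le; linarith) hr
    rw [add_sub_cancel, Real.div_rpow hz hx.le, le_div_iff₀ (by positivity)] at bernoulli
    have hxr : x ^ r = x ^ (r - 1) * x := by
      rw [Real.rpow_sub_one hx.ne', div_mul_cancel₀ _ hx.ne']
    calc r * x ^ (r - 1) * (y - x) ≤ r * x ^ (r - 1) * (z - x) := by
          gcongr; exact le_posPart y
      _ = (1 + r * (z / x - 1)) * x ^ r - x ^ r := by
          rw [hxr]; field_simp; ring
      _ ≤ z ^ r - x ^ r := by linarith
  · rw [rpowPosPartDeriv, Set.indicator_of_notMem (Set.notMem_Ioi.2 hx), posPart_eq_zero.2 hx,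
      Real.zero_rpow hr0, zero_mul, sub_zero]
    exact Real.rpow_nonneg (posPart_nonneg y) r

lemma mul_rpow_sub_one_le_rpow_add_rpow {r a b : ℝ} (hr : 1 ≤ r) (ha : 0 ≤ a) (hb : 0 ≤ b) :
    a * b ^ (r - 1) ≤ a ^ r + b ^ r := by
  rcases le_total a b with hab | hba
  · calc a * b ^ (r - 1) ≤ b * b ^ (r - 1) := by gcongr
      _ = b ^ r := by rw [mul_comm, ← Real.rpow_add_one' hb (by linarith), sub_add_cancel]
      _ ≤ a ^ r + b ^ r := le_add_of_nonneg_left (by positivity)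
  · calc a * b ^ (r - 1) ≤ a * a ^ (r - 1) := by gcongr
      _ = a ^ r := by rw [mul_comm, ← Real.rpow_add_one' ha (by linarith), sub_add_cancel]
      _ ≤ a ^ r + b ^ r := le_add_of_nonneg_right (by positivity)

lemma abs_rpow_eq_posPart_rpow_add_negPart_rpow {r : ℝ} (hr : r ≠ 0) (x : ℝ) :
    |x| ^ r = x⁺ ^ r + x⁻ ^ r := by
  rcases le_total 0 x with hx | hx
  · rw [abs_of_nonneg hx, posPart_eq_self.2 hx, negPart_eq_zero.2 hx, Real.zero_rpow hr, add_zero]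
  · rw [abs_of_nonpos hx, posPart_eq_zero.2 hx, negPart_eq_neg.2 hx, Real.zero_rpow hr, zero_add]

lemma Finset.sum_Icc_one_sub_sub_one {M : Type*} [AddCommGroup M] (f : ℕ → M) (n : ℕ) :
    ∑ k ∈ Finset.Icc 1 n, (f k - f (k - 1)) = f n - f 0 := by
  induction n with
  | zero => simp
  | succ n ih => rw [Finset.sum_Icc_succ_top (by omega), ih, Nat.add_sub_cancel]; abel

/-- Abel summation: the sum is `d n / c n + ∑_{k < n} d k (1 / c k - 1 / c (k + 1))`. -/
lemma Finset.sum_Icc_sub_sub_one_div_nonneg {c d : ℕ → ℝ} {n : ℕ}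
    (hc_pos : ∀ k, 1 ≤ k → k ≤ n → 0 < c k) (hc_mono : ∀ k, 1 ≤ k → k < n → c k ≤ c (k + 1))
    (hd0 : d 0 = 0) (hd : ∀ k, 1 ≤ k → k ≤ n → 0 ≤ d k) :
    0 ≤ ∑ k ∈ Finset.Icc 1 n, (d k - d (k - 1)) / c k := by
  have partial_sum : ∀ m ≤ n, d m / c m ≤ ∑ k ∈ Finset.Icc 1 m, (d k - d (k - 1)) / c k := by
    intro m
    induction m with
    | zero => simp [hd0]
    | succ m ih =>
      intro hm
      rw [Finset.sum_Icc_succ_top (by omega), Nat.add_sub_cancel]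
      have hdc : d m / c (m + 1) ≤ d m / c m := by
        rcases Nat.eq_zero_or_pos m with rfl | hm0
        · simp [hd0]
        · exact div_le_div_of_nonneg_left (hd m hm0 (by omega)) (hc_pos m hm0 (by omega))
            (hc_mono m hm0 (by omega))
      have := ih (by omega)
      rw [sub_div]
      linarith
  refine le_trans ?_ (partial_sum n le_rfl)
  rcases Nat.eq_zero_or_pos n with rfl | hn
  · simp [hd0]
  · exact div_nonneg (hd n hn le_rfl) (hc_pos n hn le_rfl).le

section Integrability

variable {Ω : Type*} [MeasurableSpace Ω] {μ : Measure Ω}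

lemma integrable_posPart_rpow {r : ℝ} (hr : 0 ≤ r) {X : Ω → ℝ}
    (hX_meas : AEStronglyMeasurable X μ) (hX : Integrable (fun ω => |X ω| ^ r) μ) :
    Integrable (fun ω => (X ω)⁺ ^ r) μ := by
  refine hX.mono' (((Real.continuous_rpow_const hr).comp
    (continuous_id.max continuous_const)).comp_aestronglyMeasurable hX_meas)
    (ae_of_all _ fun ω => ?_)
  rw [Real.norm_eq_abs, abs_of_nonneg (Real.rpow_nonneg (posPart_nonneg _) r)]
  exact Real.rpow_le_rpow (posPart_nonneg _) (sup_le (le_abs_self _) (abs_nonneg _)) hr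

lemma integrable_mul_of_abs_le_rpow_sub_one {r C : ℝ} (hr : 1 ≤ r) (hC : 0 ≤ C)
    {X Z h : Ω → ℝ} (hZ_meas : AEStronglyMeasurable Z μ) (hh_meas : AEStronglyMeasurable h μ)
    (hZ : Integrable (fun ω => |Z ω| ^ r) μ) (hX : Integrable (fun ω => |X ω| ^ r) μ)
    (hh : ∀ ω, |h ω| ≤ C * |X ω| ^ (r - 1)) :
    Integrable (fun ω => Z ω * h ω) μ := by
  refine ((hZ.add hX).const_mul C).mono' (hZ_meas.mul hh_meas) (ae_of_all _ fun ω => ?_)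
  calc ‖Z ω * h ω‖ = |Z ω| * |h ω| := by rw [Real.norm_eq_abs, abs_mul]
    _ ≤ |Z ω| * (C * |X ω| ^ (r - 1)) := by gcongr; exact hh ω
    _ = C * (|Z ω| * |X ω| ^ (r - 1)) := by ring
    _ ≤ C * (|Z ω| ^ r + |X ω| ^ r) := by
        gcongr; exact mul_rpow_sub_one_le_rpow_add_rpow hr (abs_nonneg _) (abs_nonneg _)

end Integrability

section Maximal

variable {Ω : Type*} [MeasurableSpace Ω] {μ : Measure Ω} [IsFiniteMeasure μ]

theorem maximal_ineq_of_setIntegral_le_succ {Y : ℕ → Ω → ℝ} (hY_nonneg : ∀ k ω, 0 ≤ Y k ω)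
    (hY_int : ∀ k, Integrable (Y k) μ) (hY0 : ∫ ω, Y 0 ω ∂μ = 0)
    {A : ℕ → Set Ω} (hA_meas : ∀ k, MeasurableSet (A k)) (hA_mono : Monotone A) (hA0 : A 0 = ∅)
    {n : ℕ} {c : ℕ → ℝ} (hc_pos : ∀ k, 1 ≤ k → k ≤ n → 0 < c k)
    (hc_mono : ∀ k, 1 ≤ k → k < n → c k ≤ c (k + 1)) {t : ℝ}
    (hYA : ∀ k, 1 ≤ k → k ≤ n → ∀ ω ∈ A k \ A (k - 1), t * c k ≤ Y k ω)
    (hstep : ∀ k, 1 ≤ k → k < n → ∫ ω in A k, Y k ω ∂μ ≤ ∫ ω in A k, Y (k + 1) ω ∂μ) :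
    t * μ.real (A n) ≤ ∑ k ∈ Finset.Icc 1 n, ((∫ ω, Y k ω ∂μ) - ∫ ω, Y (k - 1) ω ∂μ) / c k := by
  have entry : ∀ k ∈ Finset.Icc 1 n, t * (μ.real (A k) - μ.real (A (k - 1)))
      ≤ ((∫ ω in A k, Y k ω ∂μ) - ∫ ω in A (k - 1), Y k ω ∂μ) / c k := by
    intro k hk
    obtain ⟨hk1, hkn⟩ := Finset.mem_Icc.1 hk
    have hsub : A (k - 1) ⊆ A k := hA_mono (Nat.sub_le k 1)
    rw [le_div_iff₀ (hc_pos k hk1 hkn), ← measureReal_sdiff hsub (hA_meas _),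
      ← setIntegral_sdiff (hA_meas _) (hY_int k).integrableOn hsub]
    calc t * μ.real (A k \ A (k - 1)) * c k = ∫ _ in A k \ A (k - 1), t * c k ∂μ := by
          rw [setIntegral_const, smul_eq_mul]; ring
      _ ≤ ∫ ω in A k \ A (k - 1), Y k ω ∂μ :=
          setIntegral_mono_on integrableOn_const (hY_int k).integrableOn
            ((hA_meas _).diff (hA_meas _)) (hYA k hk1 hkn)
  have gain : ∀ k ∈ Finset.Icc 1 n,
      ∫ ω in A (k - 1), Y (k - 1) ω ∂μ ≤ ∫ ω in A (k - 1), Y k ω ∂μ := by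
    intro k hk
    obtain ⟨hk1, hkn⟩ := Finset.mem_Icc.1 hk
    rcases Nat.lt_or_ge 1 k with hk2 | hk2
    · simpa [Nat.sub_add_cancel hk1] using hstep (k - 1) (by omega) (by omega)
    · obtain rfl : k = 1 := by omega
      simp [hA0]
  have abel := Finset.sum_Icc_sub_sub_one_div_nonneg hc_pos hc_mono
    (d := fun k => (∫ ω, Y k ω ∂μ) - ∫ ω in A k, Y k ω ∂μ) (by simp [hA0, hY0])
    (fun k _ _ => sub_nonneg.2 (setIntegral_le_integral (hY_int k) (ae_of_all _ (hY_nonneg k))))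
  calc t * μ.real (A n) = ∑ k ∈ Finset.Icc 1 n, t * (μ.real (A k) - μ.real (A (k - 1))) := by
        rw [← Finset.mul_sum, Finset.sum_Icc_one_sub_sub_one, hA0, measureReal_empty, sub_zero]
    _ ≤ ∑ k ∈ Finset.Icc 1 n, ((∫ ω in A k, Y k ω ∂μ) - ∫ ω in A (k - 1), Y k ω ∂μ) / c k :=
        Finset.sum_le_sum entry
    _ ≤ ∑ k ∈ Finset.Icc 1 n,
          ((∫ ω in A k, Y k ω ∂μ) - ∫ ω in A (k - 1), Y (k - 1) ω ∂μ) / c k := by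
        refine Finset.sum_le_sum fun k hk => div_le_div_of_nonneg_right
          (sub_le_sub_left (gain k hk) _) ?_
        obtain ⟨hk1, hkn⟩ := Finset.mem_Icc.1 hk
        exact (hc_pos k hk1 hkn).le
    _ ≤ ∑ k ∈ Finset.Icc 1 n, ((∫ ω, Y k ω ∂μ) - ∫ ω, Y (k - 1) ω ∂μ) / c k := by
        rw [← sub_nonneg, ← Finset.sum_sub_distrib]
        convert abel using 2 with k
        ring

end Maximal

section ExceedSet

variable {Ω : Type*} {G : ℕ → Ω → ℝ} {a : ℕ → ℝ}

def exceedSet (G : ℕ → Ω → ℝ) (a : ℕ → ℝ) (k : ℕ) : Set Ω :=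
  {ω | ∃ j, 1 ≤ j ∧ j ≤ k ∧ a j ≤ G j ω}

@[simp]
lemma exceedSet_zero : exceedSet G a 0 = ∅ := by
  ext ω
  simp only [exceedSet, Set.mem_ofPred_eq, Set.mem_empty_iff_false, iff_false]
  omega

lemma monotone_exceedSet : Monotone (exceedSet G a) :=
  fun _ _ hkl _ ⟨j, hj1, hjk, hj⟩ => ⟨j, hj1, hjk.trans hkl, hj⟩

lemma measurableSet_exceedSet [MeasurableSpace Ω] (hG : ∀ k, Measurable (G k)) (k : ℕ) :
    MeasurableSet (exceedSet G a k) := by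
  simp only [exceedSet, Set.ofPred_exists, Set.ofPred_and]
  exact MeasurableSet.iUnion fun j => (MeasurableSet.const _).inter
    ((MeasurableSet.const _).inter (measurableSet_le measurable_const (hG j)))

lemma le_of_mem_exceedSet_sdiff {k : ℕ} {ω : Ω}
    (hω : ω ∈ exceedSet G a k \ exceedSet G a (k - 1)) : a k ≤ G k ω := by
  obtain ⟨⟨j, hj1, hjk, hj⟩, hω'⟩ := hω
  obtain rfl : j = k := by
    by_contra hjk'
    exact hω' ⟨j, hj1, by omega, hj⟩
  exact hj

end ExceedSet

namespace IsDemimartingale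

variable {Ω : Type*} [MeasurableSpace Ω] {μ : Measure Ω} {S F G : ℕ → Ω → ℝ}

lemma congr_ae (hS : IsDemimartingale μ S) (hSF : ∀ k, S k =ᵐ[μ] F k) :
    IsDemimartingale μ F := by
  refine ⟨fun j hj => (hS.1 j hj).congr (hSF j), fun j hj g hg hint => ?_⟩
  have h : (fun ω => (S (j + 1) ω - S j ω) * g (fun i => S (i.val + 1) ω))
      =ᵐ[μ] fun ω => (F (j + 1) ω - F j ω) * g (fun i => F (i.val + 1) ω) :=
    (ae_all_iff.2 hSF).mono fun ω hω => by simp only [hω]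
  rw [← integral_congr_ae h]
  exact hS.2 j hj g hg (hint.congr h.symm)

lemma neg (hG : IsDemimartingale μ G) : IsDemimartingale μ (-G) := by
  refine ⟨fun j hj => (hG.1 j hj).neg, fun j hj g hg hint => ?_⟩
  have hg' : Monotone fun x : Fin j → ℝ => -g fun i => -x i :=
    fun x y hxy => neg_le_neg (hg fun i => neg_le_neg (hxy i))
  have h : (fun ω => ((-G) (j + 1) ω - (-G) j ω) * g (fun i => (-G) (i.val + 1) ω))
      = fun ω => (G (j + 1) ω - G j ω) * (fun x : Fin j → ℝ => -g fun i => -x i)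
        (fun i => G (i.val + 1) ω) := by
    funext ω
    simp only [Pi.neg_apply]
    ring
  rw [h] at hint ⊢
  exact hG.2 j hj _ hg' hint

lemma setIntegral_posPart_rpow_le_succ (hG : IsDemimartingale μ G)
    (hG_meas : ∀ k, Measurable (G k)) {r : ℝ} (hr : 1 ≤ r)
    (hG_int : ∀ k, Integrable (fun ω => |G k ω| ^ r) μ) (a : ℕ → ℝ) {j : ℕ} (hj : 1 ≤ j) :
    ∫ ω in exceedSet G a j, (G j ω)⁺ ^ r ∂μ ≤ ∫ ω in exceedSet G a j, (G (j + 1) ω)⁺ ^ r ∂μ := by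
  set A := exceedSet G a j
  have hA : MeasurableSet A := measurableSet_exceedSet hG_meas j
  set U : Set (Fin j → ℝ) := {x | ∃ i : Fin j, a (i.val + 1) ≤ x i}
  set g : (Fin j → ℝ) → ℝ := U.indicator fun x => rpowPosPartDeriv r (x ⟨j - 1, by omega⟩)
  have hg_mono : Monotone g := by
    intro x y hxy
    by_cases hx : x ∈ U
    · have hy : y ∈ U := let ⟨i, hi⟩ := hx; ⟨i, hi.trans (hxy i)⟩
      simp only [g, Set.indicator_of_mem hx, Set.indicator_of_mem hy]
      exact monotone_rpowPosPartDeriv hr (hxy _)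
    · simp only [g, Set.indicator_of_notMem hx]
      exact Set.indicator_nonneg (fun _ _ => rpowPosPartDeriv_nonneg (by linarith) _) y
  have hmem : ∀ ω, (fun i : Fin j => G (i.val + 1) ω) ∈ U ↔ ω ∈ A := fun ω =>
    ⟨fun ⟨i, hi⟩ => ⟨i.val + 1, by omega, by omega, hi⟩,
      fun ⟨k, hk1, hkj, hk⟩ => ⟨⟨k - 1, by omega⟩, by simpa [Nat.sub_add_cancel hk1] using hk⟩⟩
  have hg_eval : ∀ ω, (G (j + 1) ω - G j ω) * g (fun i => G (i.val + 1) ω)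
      = A.indicator (fun ω => (G (j + 1) ω - G j ω) * rpowPosPartDeriv r (G j ω)) ω := by
    intro ω
    by_cases hω : ω ∈ A
    · simp [g, Set.indicator_of_mem hω, Set.indicator_of_mem ((hmem ω).2 hω),
        Nat.sub_add_cancel hj]
    · simp [g, Set.indicator_of_notMem hω, Set.indicator_of_notMem (mt (hmem ω).1 hω)]
  have hint : Integrable (fun ω => (G (j + 1) ω - G j ω) * rpowPosPartDeriv r (G j ω)) μ := by
    have hmul : ∀ k, Integrable (fun ω => G k ω * rpowPosPartDeriv r (G j ω)) μ := fun k =>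
      integrable_mul_of_abs_le_rpow_sub_one hr (by linarith) (hG_meas k).aestronglyMeasurable
        ((measurable_rpowPosPartDeriv r).comp (hG_meas j)).aestronglyMeasurable (hG_int k)
        (hG_int j) fun ω => abs_rpowPosPartDeriv_le (by linarith) _
    simp only [sub_mul]
    exact (hmul (j + 1)).sub (hmul j)
  have hposPart : ∀ k, Integrable (fun ω => (G k ω)⁺ ^ r) μ := fun k =>
    integrable_posPart_rpow (by linarith) (hG_meas k).aestronglyMeasurable (hG_int k)
  have hdemi := hG.2 j hj g hg_mono (by simpa only [hg_eval] using hint.indicator hA)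
  simp only [hg_eval, integral_indicator hA] at hdemi
  rw [← sub_nonneg, ← integral_sub (hposPart _).integrableOn (hposPart _).integrableOn]
  exact hdemi.trans (setIntegral_mono_on hint.integrableOn
    ((hposPart _).sub (hposPart _)).integrableOn hA fun ω _ => sub_mul_rpowPosPartDeriv_le hr _ _)

variable [IsFiniteMeasure μ] {r ε : ℝ} {n : ℕ} {b : ℕ → ℝ}

theorem hajek_renyi_posPart (hG : IsDemimartingale μ G) (hG_meas : ∀ k, Measurable (G k))
    (hG0 : G 0 =ᵐ[μ] 0) (hr : 1 ≤ r) (hG_int : ∀ k, Integrable (fun ω => |G k ω| ^ r) μ)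
    (hb_pos : ∀ k, 1 ≤ k → k ≤ n → 0 < b k) (hb_mono : ∀ k, 1 ≤ k → k < n → b k ≤ b (k + 1))
    (hε : 0 < ε) :
    ε ^ r * μ.real (exceedSet G (fun k => ε * b k) n)
      ≤ ∑ k ∈ Finset.Icc 1 n,
          ((∫ ω, (G k ω)⁺ ^ r ∂μ) - ∫ ω, (G (k - 1) ω)⁺ ^ r ∂μ) / b k ^ r := by
  have hr0 : 0 < r := by linarith
  refine maximal_ineq_of_setIntegral_le_succ (fun k ω => Real.rpow_nonneg (posPart_nonneg _) r)
    (fun k => integrable_posPart_rpow hr0.le (hG_meas k).aestronglyMeasurable (hG_int k)) ?_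
    (measurableSet_exceedSet hG_meas) monotone_exceedSet exceedSet_zero
    (fun k hk1 hkn => Real.rpow_pos_of_pos (hb_pos k hk1 hkn) r)
    (fun k hk1 hkn => Real.rpow_le_rpow (hb_pos k hk1 hkn.le).le (hb_mono k hk1 hkn) hr0.le)
    (fun k hk1 hkn ω hω => ?_)
    (fun k hk _ => hG.setIntegral_posPart_rpow_le_succ hG_meas hr hG_int _ hk)
  · exact integral_eq_zero_of_ae (hG0.mono fun ω h => by simp [h, Real.zero_rpow hr0.ne'])
  · rw [← Real.mul_rpow hε.le (hb_pos k hk1 hkn).le]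
    have hpos : 0 ≤ ε * b k := mul_nonneg hε.le (hb_pos k hk1 hkn).le
    exact Real.rpow_le_rpow hpos ((le_of_mem_exceedSet_sdiff hω).trans (le_posPart _)) hr0.le

theorem hajek_renyi_of_measurable (hG : IsDemimartingale μ G) (hG_meas : ∀ k, Measurable (G k))
    (hG0 : G 0 =ᵐ[μ] 0) (hr : 1 ≤ r) (hG_int : ∀ k, Integrable (fun ω => |G k ω| ^ r) μ)
    (hb_pos : ∀ k, 1 ≤ k → k ≤ n → 0 < b k) (hb_mono : ∀ k, 1 ≤ k → k < n → b k ≤ b (k + 1))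
    (hε : 0 < ε) :
    ε ^ r * μ.real {ω | ∃ k, 1 ≤ k ∧ k ≤ n ∧ ε ≤ |G k ω| / b k}
      ≤ ∑ k ∈ Finset.Icc 1 n, ((∫ ω, |G k ω| ^ r ∂μ) - ∫ ω, |G (k - 1) ω| ^ r ∂μ) / b k ^ r := by
  have hr0 : 0 < r := by linarith
  have hplus := hG.hajek_renyi_posPart hG_meas hG0 hr hG_int hb_pos hb_mono hε
  have hminus := hG.neg.hajek_renyi_posPart (fun k => (hG_meas k).neg)
    (hG0.mono fun ω h => by simp [h]) hr (by simpa using hG_int) hb_pos hb_mono hε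
  have hsplit : ∀ k, ∫ ω, |G k ω| ^ r ∂μ = (∫ ω, (G k ω)⁺ ^ r ∂μ) + ∫ ω, ((-G) k ω)⁺ ^ r ∂μ := by
    intro k
    rw [← integral_add
      (integrable_posPart_rpow (X := G k) hr0.le (hG_meas k).aestronglyMeasurable (hG_int k))
      (integrable_posPart_rpow (X := (-G) k) hr0.le (hG_meas k).neg.aestronglyMeasurable
        (by simpa using hG_int k))]
    simp only [Pi.neg_apply, posPart_neg, abs_rpow_eq_posPart_rpow_add_negPart_rpow hr0.ne']
  have hunion : {ω | ∃ k, 1 ≤ k ∧ k ≤ n ∧ ε ≤ |G k ω| / b k}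
      ⊆ exceedSet G (fun k => ε * b k) n ∪ exceedSet (-G) (fun k => ε * b k) n := by
    rintro ω ⟨k, hk1, hkn, hk⟩
    rcases le_abs'.1 ((le_div_iff₀ (hb_pos k hk1 hkn)).1 hk) with hk' | hk'
    · exact Or.inr ⟨k, hk1, hkn, by simpa [le_neg] using hk'⟩
    · exact Or.inl ⟨k, hk1, hkn, hk'⟩
  calc ε ^ r * μ.real {ω | ∃ k, 1 ≤ k ∧ k ≤ n ∧ ε ≤ |G k ω| / b k}
      ≤ ε ^ r * (μ.real (exceedSet G (fun k => ε * b k) n)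
          + μ.real (exceedSet (-G) (fun k => ε * b k) n)) := by
        gcongr
        exact (measureReal_mono hunion).trans (measureReal_union_le _ _)
    _ ≤ (∑ k ∈ Finset.Icc 1 n,
          ((∫ ω, (G k ω)⁺ ^ r ∂μ) - ∫ ω, (G (k - 1) ω)⁺ ^ r ∂μ) / b k ^ r)
        + ∑ k ∈ Finset.Icc 1 n,
          ((∫ ω, ((-G) k ω)⁺ ^ r ∂μ) - ∫ ω, ((-G) (k - 1) ω)⁺ ^ r ∂μ) / b k ^ r := by
        rw [mul_add]
        exact add_le_add hplus hminus
    _ = _ := by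
        rw [← Finset.sum_add_distrib]
        refine Finset.sum_congr rfl fun k _ => ?_
        rw [hsplit, hsplit]
        ring

end IsDemimartingale

/-- **Hájek–Rényi type inequality for demimartingales** (Christofides / Tómács–Libor):
if `(S_n)_{n≥1}` is a demimartingale with `S_0 = 0` (so that `E[|S_0|^r] = 0`), `r ≥ 1`
with `|S_k|^r` integrable for every `k`, `(b_k)` positive nondecreasing and `ε > 0`, then
`P(max_{1≤k≤n} |S_k|/b_k ≥ ε) ≤ ε^{-r} Σ_{k=1}^n (E[|S_k|^r] - E[|S_{k-1}|^r])/b_k^r`.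
The event `max_{1≤k≤n} |S_k|/b_k ≥ ε` is expressed as the existence of some `1 ≤ k ≤ n`
with `|S_k|/b_k ≥ ε`; `x ^ r` denotes the real power `Real.rpow`. -/
theorem hajek_renyi_demimartingale
    {Ω : Type*} [MeasurableSpace Ω] (μ : Measure Ω) [IsProbabilityMeasure μ]
    (S : ℕ → Ω → ℝ)
    (hS : IsDemimartingale μ S)
    (hS0 : ∀ ω, S 0 ω = 0)
    (r : ℝ) (hr : 1 ≤ r)
    (hS_int : ∀ k, Integrable (fun ω => |S k ω| ^ r) μ)
    (n : ℕ) (b : ℕ → ℝ)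
    (hb_pos : ∀ k, 1 ≤ k → k ≤ n → 0 < b k)
    (hb_mono : ∀ k, 1 ≤ k → k < n → b k ≤ b (k + 1))
    (ε : ℝ) (hε : 0 < ε) :
    (μ {ω | ∃ k, 1 ≤ k ∧ k ≤ n ∧ ε ≤ |S k ω| / b k}).toReal
      ≤ ε ^ (-r) * ∑ k ∈ Finset.Icc 1 n,
          ((∫ ω, |S k ω| ^ r ∂μ) - (∫ ω, |S (k - 1) ω| ^ r ∂μ)) / b k ^ r := by
  have hS_meas : ∀ k, AEStronglyMeasurable (S k) μ := fun k => by
    rcases Nat.eq_zero_or_pos k with rfl | hk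
    · exact aestronglyMeasurable_const.congr (ae_of_all _ fun ω => (hS0 ω).symm)
    · exact (hS.1 k hk).aestronglyMeasurable
  set F : ℕ → Ω → ℝ := fun k => (hS_meas k).mk (S k)
  have hSF : ∀ k, S k =ᵐ[μ] F k := fun k => (hS_meas k).ae_eq_mk
  have hF := (hS.congr_ae hSF).hajek_renyi_of_measurable
    (fun k => (hS_meas k).stronglyMeasurable_mk.measurable)
    ((hSF 0).symm.trans (ae_of_all _ hS0)) hr
    (fun k => (hS_int k).congr ((hSF k).mono fun ω hω => by simp only [hω])) hb_pos hb_mono hε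
  have hevent : μ {ω | ∃ k, 1 ≤ k ∧ k ≤ n ∧ ε ≤ |S k ω| / b k}
      = μ {ω | ∃ k, 1 ≤ k ∧ k ≤ n ∧ ε ≤ |F k ω| / b k} :=
    measure_congr (eventuallyEq_set.2 ((ae_all_iff.2 hSF).mono fun ω hω => by
      simp only [Set.mem_ofPred_eq, hω]))
  have hmoment : ∀ k, ∫ ω, |S k ω| ^ r ∂μ = ∫ ω, |F k ω| ^ r ∂μ := fun k =>
    integral_congr_ae ((hSF k).mono fun ω hω => by simp only [hω])
  rw [Real.rpow_neg hε.le, le_inv_mul_iff₀ (Real.rpow_pos_of_pos hε r), hevent]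
  simpa only [hmoment, measureReal_def] using hF
end
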